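/- arXiv:1612.03702 — 13 statements merged into one kernel-verified Lean document; each statement's English description precedes it below -/
import Mathlib

section
/- Let N be a positive integer and r ∈ {1,…,N}. Define T_r on pairs of permutations (j,k) of {1,…,N} by T_{r,1}(j,k) = j ∘ τ_{r,(j⁻¹∘k)(r)} and T_{r,2}(j,k) = k ∘ τ_{r,(k⁻¹∘j)(r)}, where τ_{a,b} denotes the transposition of a and b. Then T_r ∘ T_r is the identity map on pairs of permutations; in particular T_r is a bijection and T_{r,1}(j,k)(r) = k(r), T_{r,2}(j,k)(r) = j(r). -/
/-!
Write `s = (j⁻¹ * k) r`. The first component `j' = j * τ_{r,s}` sends `r` to `j s = k r`, and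
symmetrically `k'` sends `r` to `j r`; hence `(j'⁻¹ * k') r = τ_{r,s} (j⁻¹ (j r)) = s`. So the second
application of `T_r` multiplies `j'` by the same transposition `τ_{r,s}`, which cancels.
-/

namespace Equiv.Perm

variable {α : Type*} [DecidableEq α] (r : α) (j k : Perm α)

def matchAt : Perm α := j * swap r ((j⁻¹ * k) r)

theorem matchAt_apply_self : matchAt r j k r = k r := by
  simp [matchAt]

theorem inv_matchAt_mul_matchAt_apply_self :
    ((matchAt r j k)⁻¹ * matchAt r k j) r = (j⁻¹ * k) r := by
  rw [mul_apply, matchAt_apply_self]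
  simp [matchAt, mul_apply]

theorem matchAt_matchAt : matchAt r (matchAt r j k) (matchAt r k j) = j := by
  rw [matchAt, inv_matchAt_mul_matchAt_apply_self, matchAt, mul_assoc, swap_mul_self, mul_one]

end Equiv.Perm

open Equiv.Perm in
theorem stmt_0_general (N : ℕ) (r : Fin N)
    (T : Equiv.Perm (Fin N) × Equiv.Perm (Fin N) →
         Equiv.Perm (Fin N) × Equiv.Perm (Fin N))
    (hT : ∀ p : Equiv.Perm (Fin N) × Equiv.Perm (Fin N),
      T p = (p.1 * Equiv.swap r ((p.1⁻¹ * p.2) r),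
             p.2 * Equiv.swap r ((p.2⁻¹ * p.1) r))) :
    (T ∘ T = id) ∧ Function.Bijective T ∧
      ∀ p : Equiv.Perm (Fin N) × Equiv.Perm (Fin N),
        (T p).1 r = p.2 r ∧ (T p).2 r = p.1 r := by
  have hT' : ∀ p, T p = (matchAt r p.1 p.2, matchAt r p.2 p.1) := hT
  have hInvolutive : Function.Involutive T := fun p => by
    simp only [hT', matchAt_matchAt]
  refine ⟨hInvolutive.comp_self, hInvolutive.bijective, fun p => ?_⟩
  simp only [hT', matchAt_apply_self, and_self]

/-- Lemma 1 (involution `T_r` on pairs of permutations). -/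
theorem stmt_0 (N : ℕ) (hN : 1 ≤ N) (r : Fin N)
    (T : Equiv.Perm (Fin N) × Equiv.Perm (Fin N) →
         Equiv.Perm (Fin N) × Equiv.Perm (Fin N))
    (hT : ∀ p : Equiv.Perm (Fin N) × Equiv.Perm (Fin N),
      T p = (p.1 * Equiv.swap r ((p.1⁻¹ * p.2) r),
             p.2 * Equiv.swap r ((p.2⁻¹ * p.1) r))) :
    (T ∘ T = id) ∧ Function.Bijective T ∧
      ∀ p : Equiv.Perm (Fin N) × Equiv.Perm (Fin N),
        (T p).1 r = p.2 r ∧ (T p).2 r = p.1 r :=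
  stmt_0_general N r T hT
end

section
/- Let z_1,…,z_N be complex numbers, and for A ⊆ {1,…,N} and k ∈ ℤ let E_{A,k} = ∑_{J⊆A, |J|=k} ∏_{j∈J} z_j (with E_{A,0}=1 and E_{A,k}=0 for k<0 or k>|A|). Then for all a,b ∈ {0,1,…,N}: (a+1)(N−b)·E_{[N],a+1}·E_{[N],b} − (b+1)(N−a)·E_{[N],a}·E_{[N],b+1} = (1/2)·∑_{(u,v), u≠v} (z_u−z_v)² · (E_{[N]∖{u,v},b−1}·E_{[N]∖{u,v},a} − E_{[N]∖{u,v},a−1}·E_{[N]∖{u,v},b}), where the sum is over ordered pairs (u,v) of distinct elements of {1,…,N}. -/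
open Finset

noncomputable def ES {N : ℕ} (z : Fin N → ℂ) (A : Finset (Fin N)) (k : ℤ) : ℂ :=
  if 0 ≤ k then ∑ J ∈ A.powersetCard k.toNat, ∏ j ∈ J, z j else 0

variable {N : ℕ} (z : Fin N → ℂ)

lemma ES_neg {A : Finset (Fin N)} {k : ℤ} (hk : k < 0) : ES z A k = 0 := by
  simp [ES, not_le.2 hk]

lemma ES_nat (A : Finset (Fin N)) (n : ℕ) :
    ES z A n = ∑ J ∈ A.powersetCard n, ∏ j ∈ J, z j := by
  simp [ES]

lemma ES_split {A : Finset (Fin N)} {u : Fin N} (hu : u ∈ A) (k : ℤ) :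
    ES z A k = ES z (A.erase u) k + z u * ES z (A.erase u) (k - 1) := by
  rcases lt_trichotomy k 0 with hk | hk | hk
  · rw [ES_neg z hk, ES_neg z hk, ES_neg z (by omega)]; ring
  · subst hk
    rw [ES_neg z (by norm_num : (0:ℤ) - 1 < 0)]
    simp [ES]
  · obtain ⟨n, rfl⟩ : ∃ n : ℕ, k = (n : ℤ) + 1 := ⟨(k - 1).toNat, by omega⟩
    rw [show ((n:ℤ)+1) - 1 = (n:ℤ) by ring]
    rw [show ((n:ℤ)+1) = ((n+1 : ℕ) : ℤ) by push_cast; ring]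
    rw [ES_nat, ES_nat, ES_nat]
    have h2 : u ∉ A.erase u := notMem_erase u A
    nth_rewrite 1 [(insert_erase hu).symm]
    rw [powersetCard_succ_insert h2]
    rw [sum_union ?disj]
    case disj =>
      refine disjoint_left.2 fun J hJ hJ' => ?_
      obtain ⟨K, hK, rfl⟩ := mem_image.1 hJ'
      exact h2 ((mem_powersetCard.1 hJ).1 (mem_insert_self u K))
    congr 1
    rw [sum_image ?inj]
    case inj =>
      intro J hJ K hK h
      have hJu : u ∉ J := fun h' => h2 ((mem_powersetCard.1 hJ).1 h')
      have hKu : u ∉ K := fun h' => h2 ((mem_powersetCard.1 hK).1 h')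
      have := congrArg (fun s => Finset.erase s u) h
      simpa [erase_insert hJu, erase_insert hKu] using this
    rw [mul_sum]
    refine sum_congr rfl fun J hJ => ?_
    have hJu : u ∉ J := fun h' => h2 ((mem_powersetCard.1 hJ).1 h')
    rw [prod_insert hJu]

lemma powersetCard_erase (A : Finset (Fin N)) (u : Fin N) (n : ℕ) :
    (A.erase u).powersetCard n = (A.powersetCard n).filter (fun J => u ∉ J) := by
  ext J
  simp only [mem_powersetCard, mem_filter, subset_erase]
  tauto

lemma ES_deriv (A : Finset (Fin N)) (k : ℤ) :
    ∑ u ∈ A, ES z (A.erase u) k = ((A.card : ℂ) - k) * ES z A k := by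
  rcases lt_or_ge k 0 with hk | hk
  · simp [ES_neg z hk]
  · obtain ⟨n, rfl⟩ : ∃ n : ℕ, k = n := ⟨k.toNat, by omega⟩
    simp only [ES_nat]
    calc ∑ u ∈ A, ∑ J ∈ (A.erase u).powersetCard n, ∏ j ∈ J, z j
        = ∑ u ∈ A, ∑ J ∈ A.powersetCard n, if u ∉ J then ∏ j ∈ J, z j else 0 := by
          refine sum_congr rfl fun u _ => ?_
          rw [powersetCard_erase, sum_filter]
      _ = ∑ J ∈ A.powersetCard n, ∑ u ∈ A, if u ∉ J then ∏ j ∈ J, z j else 0 := sum_comm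
      _ = ∑ J ∈ A.powersetCard n, ((A.card : ℂ) - (n : ℤ)) * ∏ j ∈ J, z j := by
          refine sum_congr rfl fun J hJ => ?_
          obtain ⟨hJA, hJc⟩ := mem_powersetCard.1 hJ
          have hle : J.card ≤ A.card := card_le_card hJA
          rw [← sum_filter, sum_const, ← sdiff_eq_filter, card_sdiff_of_subset hJA, nsmul_eq_mul]
          rw [Nat.cast_sub hle, hJc]
          push_cast
          ring
      _ = _ := by rw [mul_sum]

lemma ES_mul_deriv (A : Finset (Fin N)) (k : ℤ) :
    ∑ u ∈ A, z u * ES z (A.erase u) (k - 1) = (k : ℂ) * ES z A k := by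
  have h : ∀ u ∈ A, z u * ES z (A.erase u) (k - 1) = ES z A k - ES z (A.erase u) k :=
    fun u hu => by rw [ES_split z hu k]; ring
  rw [sum_congr rfl h, sum_sub_distrib, sum_const, ES_deriv, nsmul_eq_mul]
  ring

/-- Dougall's identity for elementary symmetric polynomials
(Corollary to Theorem 3). -/
theorem stmt_1 (N : ℕ) (hN : 1 ≤ N) (z : Fin N → ℂ)
    (E : Finset (Fin N) → ℤ → ℂ)
    (hE : ∀ (A : Finset (Fin N)) (k : ℤ),
      E A k = if 0 ≤ k then ∑ J ∈ A.powersetCard k.toNat, ∏ j ∈ J, z j else 0)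
    (a b : ℕ) (ha : a ≤ N) (hb : b ≤ N) :
    ((a : ℂ) + 1) * ((N : ℂ) - b) * E univ ((a : ℤ) + 1) * E univ (b : ℤ)
      - ((b : ℂ) + 1) * ((N : ℂ) - a) * E univ (a : ℤ) * E univ ((b : ℤ) + 1)
    = (1 / 2) * ∑ u : Fin N, ∑ v : Fin N,
        if u ≠ v then
          (z u - z v) ^ 2 *
            (E (univ \ {u, v}) ((b : ℤ) - 1) * E (univ \ {u, v}) (a : ℤ)
              - E (univ \ {u, v}) ((a : ℤ) - 1) * E (univ \ {u, v}) (b : ℤ))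
        else 0 := by
  have hEeq : E = ES z := by
    funext A k
    rw [hE]
    rfl
  subst hEeq
  have hcard : ((univ : Finset (Fin N)).card : ℂ) = (N : ℂ) := by simp
  -- derivative identities
  have hmul : ∀ m : ℕ, ((m : ℂ) + 1) * ES z univ ((m : ℤ) + 1)
      = ∑ u : Fin N, z u * ES z (univ.erase u) (m : ℤ) := by
    intro m
    have h := ES_mul_deriv z univ ((m : ℤ) + 1)
    rw [show ((m : ℤ) + 1) - 1 = (m : ℤ) by ring] at h
    rw [h]
    push_cast
    ring
  have hder : ∀ m : ℕ, ((N : ℂ) - m) * ES z univ (m : ℤ)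
      = ∑ u : Fin N, ES z (univ.erase u) (m : ℤ) := by
    intro m
    rw [ES_deriv, hcard]
    push_cast
    ring
  -- abbreviation
  set D : Fin N → Fin N → ℂ := fun u v =>
    z u * ES z (univ.erase u) (a : ℤ) * ES z (univ.erase v) (b : ℤ)
      - z u * ES z (univ.erase u) (b : ℤ) * ES z (univ.erase v) (a : ℤ) with hD
  have hLHS : ((a : ℂ) + 1) * ((N : ℂ) - b) * ES z univ ((a : ℤ) + 1) * ES z univ (b : ℤ)
      - ((b : ℂ) + 1) * ((N : ℂ) - a) * ES z univ (a : ℤ) * ES z univ ((b : ℤ) + 1)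
      = ∑ u : Fin N, ∑ v : Fin N, D u v := by
    have e1 : ((a : ℂ) + 1) * ((N : ℂ) - b) * ES z univ ((a : ℤ) + 1) * ES z univ (b : ℤ)
        = (∑ u : Fin N, z u * ES z (univ.erase u) (a : ℤ))
          * (∑ v : Fin N, ES z (univ.erase v) (b : ℤ)) := by
      rw [← hmul a, ← hder b]; ring
    have e2 : ((b : ℂ) + 1) * ((N : ℂ) - a) * ES z univ (a : ℤ) * ES z univ ((b : ℤ) + 1)
        = (∑ u : Fin N, z u * ES z (univ.erase u) (b : ℤ))
          * (∑ v : Fin N, ES z (univ.erase v) (a : ℤ)) := by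
      rw [← hmul b, ← hder a]; ring
    rw [e1, e2, sum_mul_sum, sum_mul_sum, ← sum_sub_distrib]
    refine sum_congr rfl fun u _ => ?_
    rw [← sum_sub_distrib]
  -- pointwise symmetrization
  have hpt : ∀ u v : Fin N, D u v + D v u =
      if u ≠ v then
        (z u - z v) ^ 2 *
          (ES z (univ \ {u, v}) ((b : ℤ) - 1) * ES z (univ \ {u, v}) (a : ℤ)
            - ES z (univ \ {u, v}) ((a : ℤ) - 1) * ES z (univ \ {u, v}) (b : ℤ))
      else 0 := by
    intro u v
    rcases eq_or_ne u v with rfl | hne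
    · simp [hD]
      ring
    · rw [if_pos hne]
      have h1 : univ \ ({u, v} : Finset (Fin N)) = (univ.erase u).erase v := by
        ext x
        simp only [mem_sdiff, mem_univ, mem_insert, mem_singleton, mem_erase, true_and]
        tauto
      have h2 : univ \ ({u, v} : Finset (Fin N)) = (univ.erase v).erase u := by
        ext x
        simp only [mem_sdiff, mem_univ, mem_insert, mem_singleton, mem_erase, true_and]
        tauto
      have hv : v ∈ univ.erase u := by simp [hne.symm]
      have hu : u ∈ univ.erase v := by simp [hne]
      have eu : ∀ k : ℤ, ES z (univ.erase u) k
          = ES z (univ \ {u, v}) k + z v * ES z (univ \ {u, v}) (k - 1) := fun k => by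
        rw [ES_split z hv k, ← h1]
      have ev : ∀ k : ℤ, ES z (univ.erase v) k
          = ES z (univ \ {u, v}) k + z u * ES z (univ \ {u, v}) (k - 1) := fun k => by
        rw [ES_split z hu k, ← h2]
      simp only [hD, eu, ev]
      ring
  rw [hLHS]
  have hsym : ∑ u : Fin N, ∑ v : Fin N, D u v = ∑ u : Fin N, ∑ v : Fin N, D v u :=
    sum_comm
  have h2 : (∑ u : Fin N, ∑ v : Fin N, D u v) + (∑ u : Fin N, ∑ v : Fin N, D u v)
      = ∑ u : Fin N, ∑ v : Fin N,
        if u ≠ v then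
          (z u - z v) ^ 2 *
            (ES z (univ \ {u, v}) ((b : ℤ) - 1) * ES z (univ \ {u, v}) (a : ℤ)
              - ES z (univ \ {u, v}) ((a : ℤ) - 1) * ES z (univ \ {u, v}) (b : ℤ))
        else 0 := by
    nth_rewrite 2 [hsym]
    rw [show (∑ u : Fin N, ∑ v : Fin N, D u v) + (∑ u : Fin N, ∑ v : Fin N, D v u)
        = ∑ u : Fin N, ∑ v : Fin N, (D u v + D v u) by
      rw [← sum_add_distrib]
      exact sum_congr rfl fun u _ => by rw [← sum_add_distrib]]
    exact sum_congr rfl fun u _ => sum_congr rfl fun v _ => hpt u v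
  linear_combination h2 / 2
end

section
/- Let 1 ≤ n ≤ N, z_1,…,z_N ∈ ℂ, and z̃ = (1/N)∑_{j=1}^N z_j. With E_{A,k} the elementary symmetric polynomial of degree k in the variables indexed by A, one has: E_{[N],n}/C(N,n) − z̃^n = −(1/(2N)) · ∑_{(u,v), u≠v} (z_u−z_v)² · ∑_{k=2}^n (z̃^{n−k} / (k·C(N,k))) · E_{[N]∖{u,v},k−2}, where the outer sum is over ordered pairs of distinct indices u,v ∈ {1,…,N} and C(N,k) denotes the binomial coefficient. -/
/-!
Put `e k = E_{[N],k}` and `g k = z̃ ^ (n - k) * e k / C(N,k)`; the left-hand side is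
`g n - g 1`, which telescopes over `k ∈ [2, n]`. Expanding the square and double counting
with `∑ a, z a * E_{s∖a,k} = (k+1) E_{s,k+1}` and `∑ a, E_{s∖a,k} = (|s| - k) E_{s,k}` gives
`∑_{u≠v} (z u - z v)² E_{[N]∖{u,v},m} = 2 (N-m-1) (∑ z) e (m+1) - 2 (m+2) N e (m+2)`,
and `(m+2) C(N,m+2) = (N-m-1) C(N,m+1)` identifies this with the increment `g (m+2) - g (m+1)`.
-/

open Finset

theorem Multiset.esymm_cons_succ {R : Type*} [CommSemiring R] (a : R) (s : Multiset R) (k : ℕ) :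
    (a ::ₘ s).esymm (k + 1) = s.esymm (k + 1) + a * s.esymm k := by
  simp [Multiset.esymm, Multiset.powersetCard_cons, Multiset.map_map, Multiset.sum_map_mul_left]

namespace Finset

section CommSemiring

variable {ι R : Type*} [CommSemiring R] (s : Finset ι) (z : ι → R)

def esymm (k : ℕ) : R :=
  ∑ t ∈ s.powersetCard k, ∏ i ∈ t, z i

@[simp]
lemma esymm_zero : s.esymm z 0 = 1 := by simp [esymm]

lemma esymm_one : s.esymm z 1 = ∑ i ∈ s, z i := by simp [esymm, powersetCard_one]

variable [DecidableEq ι]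

lemma esymm_insert {a : ι} (ha : a ∉ s) (k : ℕ) :
    (insert a s).esymm z (k + 1) = s.esymm z (k + 1) + z a * s.esymm z k := by
  simp only [esymm, ← esymm_map_val, insert_val_of_notMem ha, Multiset.map_cons,
    Multiset.esymm_cons_succ]

lemma esymm_eq_esymm_erase_add {a : ι} (ha : a ∈ s) (k : ℕ) :
    s.esymm z (k + 1) = (s.erase a).esymm z (k + 1) + z a * (s.erase a).esymm z k := by
  rw [← esymm_insert _ z (notMem_erase a s), insert_erase ha]

lemma sum_mul_esymm_erase (k : ℕ) :
    ∑ a ∈ s, z a * (s.erase a).esymm z k = (k + 1) * s.esymm z (k + 1) := by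
  induction s using Finset.induction_on generalizing k with
  | empty => simp [esymm, powersetCard_eq_empty.2 (by simp : #(∅ : Finset ι) < k + 1)]
  | insert b s hb ih =>
    have herase : ∀ a ∈ s, (insert b s).erase a = insert b (s.erase a) := fun a ha =>
      erase_insert_of_ne fun hab => hb (hab ▸ ha)
    rw [sum_insert hb, erase_insert hb, sum_congr rfl fun a ha => by rw [herase a ha],
      esymm_insert _ _ hb]
    cases k with
    | zero =>
      have h0 := ih 0
      simp only [esymm_zero, mul_one, Nat.cast_zero, zero_add, one_mul] at h0 ⊢
      rw [h0, add_comm]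
    | succ k =>
      simp only [esymm_insert _ _ (fun h => hb (mem_of_mem_erase h)), mul_add,
        sum_add_distrib, ih, mul_left_comm (z _) (z b), ← mul_sum]
      push_cast
      ring

end CommSemiring

section CommRing

variable {ι R : Type*} [CommRing R] [DecidableEq ι] (s : Finset ι) (z : ι → R)

lemma sum_esymm_erase (k : ℕ) :
    ∑ a ∈ s, (s.erase a).esymm z k = (#s - k) * s.esymm z k := by
  cases k with
  | zero => simp
  | succ k =>
    have h : ∀ a ∈ s,
        (s.erase a).esymm z (k + 1) = s.esymm z (k + 1) - z a * (s.erase a).esymm z k :=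
      fun a ha => eq_sub_of_add_eq (esymm_eq_esymm_erase_add s z ha k).symm
    rw [sum_congr rfl h, sum_sub_distrib, sum_mul_esymm_erase, sum_const, nsmul_eq_mul]
    push_cast
    ring

lemma sum_sq_mul_esymm_erase (m : ℕ) :
    ∑ u ∈ s, z u ^ 2 * (s.erase u).esymm z m
      = (∑ i ∈ s, z i) * s.esymm z (m + 1) - (m + 2) * s.esymm z (m + 2) := by
  have h : ∀ u ∈ s, z u * s.esymm z (m + 1)
      = z u * (s.erase u).esymm z (m + 1) + z u ^ 2 * (s.erase u).esymm z m := fun u hu => by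
    rw [esymm_eq_esymm_erase_add s z hu]
    ring
  rw [sum_mul, sum_congr rfl h, sum_add_distrib, sum_mul_esymm_erase]
  push_cast
  ring

lemma sum_sum_erase_sq_sub_mul_esymm (m : ℕ) :
    ∑ u ∈ s, ∑ v ∈ s.erase u, (z u - z v) ^ 2 * ((s.erase u).erase v).esymm z m
      = 2 * (#s - (m + 1)) * (∑ i ∈ s, z i) * s.esymm z (m + 1)
        - 2 * (m + 2) * #s * s.esymm z (m + 2) := by
  have hsq : ∑ u ∈ s, z u ^ 2 * ∑ v ∈ s.erase u, ((s.erase u).erase v).esymm z m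
      = (#s - (m + 1)) * ∑ u ∈ s, z u ^ 2 * (s.erase u).esymm z m := by
    rw [mul_sum]
    refine sum_congr rfl fun u hu => ?_
    rw [sum_esymm_erase, cast_card_erase_of_mem hu]
    ring
  have hswap : ∑ u ∈ s, ∑ v ∈ s.erase u, z v ^ 2 * ((s.erase u).erase v).esymm z m
      = ∑ u ∈ s, z u ^ 2 * ∑ v ∈ s.erase u, ((s.erase u).erase v).esymm z m := by
    rw [sum_comm' (t' := s) (s' := s.erase)]
    · simp only [erase_right_comm, mul_sum]
    · intro u v
      simp only [mem_erase]
      tauto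
  have hcross : ∑ u ∈ s, ∑ v ∈ s.erase u, z u * z v * ((s.erase u).erase v).esymm z m
      = (m + 1) * (m + 2) * s.esymm z (m + 2) := by
    calc ∑ u ∈ s, ∑ v ∈ s.erase u, z u * z v * ((s.erase u).erase v).esymm z m
        = (m + 1) * ∑ u ∈ s, z u * (s.erase u).esymm z (m + 1) := by
          rw [mul_sum]
          refine sum_congr rfl fun u _ => ?_
          simp only [mul_assoc, ← mul_sum, sum_mul_esymm_erase]
          ring
      _ = (m + 1) * (m + 2) * s.esymm z (m + 2) := by
          rw [sum_mul_esymm_erase]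
          push_cast
          ring
  have hexpand : ∀ u v, (z u - z v) ^ 2 * ((s.erase u).erase v).esymm z m
      = z u ^ 2 * ((s.erase u).erase v).esymm z m + z v ^ 2 * ((s.erase u).erase v).esymm z m
        - 2 * (z u * z v * ((s.erase u).erase v).esymm z m) := fun u v => by ring
  simp only [hexpand, sum_add_distrib, sum_sub_distrib, ← mul_sum]
  rw [hswap, hsq, hcross, sum_sq_mul_esymm_erase]
  ring

end CommRing

lemma esymm_div_choose_sub_mean_mul {ι K : Type*} [DecidableEq ι] [Field K] [CharZero K]
    (s : Finset ι) (z : ι → K) {m : ℕ} (hm : m + 2 ≤ #s) :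
    s.esymm z (m + 2) / (#s).choose (m + 2)
        - (∑ i ∈ s, z i) / #s * s.esymm z (m + 1) / (#s).choose (m + 1)
      = -(1 / (2 * #s)) * ((∑ u ∈ s, ∑ v ∈ s.erase u,
          (z u - z v) ^ 2 * ((s.erase u).erase v).esymm z m) / ((m + 2) * (#s).choose (m + 2))) := by
  have hchoose : ((#s).choose (m + 1) : K) * (#s - (m + 1)) = (m + 2) * (#s).choose (m + 2) := by
    have h := congrArg (Nat.cast : ℕ → K) (Nat.choose_succ_right_eq (#s) (m + 1))
    push_cast [Nat.cast_sub (show m + 1 ≤ #s by omega)] at h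
    linear_combination -h
  have hs : (#s : K) ≠ 0 := by norm_cast; omega
  have hm2 : (m : K) + 2 ≠ 0 := by norm_cast
  have hsm : (#s - (m + 1) : K) ≠ 0 := by
    rw [← Nat.cast_succ, ← Nat.cast_sub (by omega)]
    norm_cast
    omega
  have hc2 : ((#s).choose (m + 2) : K) ≠ 0 := by norm_cast; exact (Nat.choose_pos hm).ne'
  rw [sum_sum_erase_sq_sub_mul_esymm, eq_div_of_mul_eq hsm hchoose]
  field_simp
  ring

lemma sum_Icc_succ_sub_pred {M : Type*} [AddCommGroup M] (g : ℕ → M) {m n : ℕ}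
    (hmn : m ≤ n) : ∑ k ∈ Icc (m + 1) n, (g k - g (k - 1)) = g n - g m := by
  induction n, hmn using Nat.le_induction with
  | base => simp
  | succ n hmn ih =>
    rw [sum_Icc_succ_top (by omega), ih, Nat.add_sub_cancel]
    abel

lemma sum_sum_ite_ne {ι M : Type*} [Fintype ι] [DecidableEq ι] [AddCommMonoid M]
    (f : ι → ι → M) :
    ∑ u, ∑ v, (if u ≠ v then f u v else 0) = ∑ u, ∑ v ∈ univ.erase u, f u v := by
  simp only [← sum_filter, filter_ne]

end Finset

/-- Expansion of the difference between the normalized elementary symmetric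
polynomial of degree `n` and the `n`-th power of the arithmetic mean. -/
theorem stmt_2 (N n : ℕ) (hn : 1 ≤ n) (hnN : n ≤ N) (z : Fin N → ℂ)
    (zt : ℂ) (hzt : zt = (1 / (N : ℂ)) * ∑ j : Fin N, z j) :
    (∑ J ∈ (univ : Finset (Fin N)).powersetCard n, ∏ j ∈ J, z j) / (N.choose n : ℂ)
        - zt ^ n
    = -(1 / (2 * (N : ℂ))) * ∑ u : Fin N, ∑ v : Fin N,
        if u ≠ v then
          (z u - z v) ^ 2 *
            ∑ k ∈ Finset.Icc 2 n,
              (zt ^ (n - k) / ((k : ℂ) * (N.choose k : ℂ))) *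
                ∑ J ∈ ((univ : Finset (Fin N)) \ {u, v}).powersetCard (k - 2),
                  ∏ j ∈ J, z j
        else 0 := by
  set g : ℕ → ℂ := fun k => zt ^ (n - k) * ((univ : Finset (Fin N)).esymm z k / N.choose k)
  have hmean : (∑ i, z i) / (N : ℂ) = zt := by rw [hzt, one_div_mul_eq_div]
  have hg1 : g 1 = zt ^ n := by
    rw [← pow_sub_one_mul (by omega : n ≠ 0)]
    simp only [g, esymm_one, Nat.choose_one_right]
    rw [hmean]
  have hdiff : ∀ u v : Fin N, univ \ {u, v} = ((univ : Finset (Fin N)).erase u).erase v :=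
    fun u v => by rw [sdiff_insert, sdiff_singleton_eq_erase, erase_right_comm]
  have hfactor : ∀ a b c d : ℂ, a * (b * (c * d)) = a * c * (b * d) := fun _ _ _ _ => by ring
  calc _ = g n - g 1 := by rw [hg1]; simp [g, esymm]
    _ = ∑ k ∈ Icc 2 n, (g k - g (k - 1)) := (sum_Icc_succ_sub_pred g hn).symm
    _ = _ := by
      rw [sum_sum_ite_ne]
      simp only [hdiff, ← esymm.eq_1, mul_sum, hfactor]
      rw [sum_congr rfl fun u _ => sum_comm, sum_comm]
      simp only [← mul_sum]
      refine sum_congr rfl fun k hk => ?_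
      obtain ⟨m, rfl⟩ : ∃ m, k = m + 2 := ⟨k - 2, by grind⟩
      have hstep := esymm_div_choose_sub_mean_mul (univ : Finset (Fin N)) z (m := m)
        (by rw [card_fin]; grind)
      rw [card_fin, mul_div_assoc, hmean] at hstep
      have hpow : zt ^ (n - (m + 1)) = zt ^ (n - (m + 2)) * zt := by
        rw [← pow_succ]
        congr 1
        grind
      simp only [g, show m + 2 - 1 = m + 1 from rfl, hpow]
      push_cast
      linear_combination zt ^ (n - (m + 2)) * hstep
end

section
/- Let n ≥ 1, z_1,…,z_n ∈ ℂ, and z̃ = (1/n)∑_{j=1}^n z_j. Then ∏_{j=1}^n z_j − z̃^n = −(1/(2n)) · ∑_{(u,v), u≠v} (z_u−z_v)² · ∑_{k=2}^n (z̃^{n−k} / (k·C(n,k))) · E_{[n]∖{u,v},k−2}, where the outer sum runs over ordered pairs of distinct indices u,v ∈ {1,…,n}, C(n,k) is the binomial coefficient, and E_{A,m} is the elementary symmetric polynomial of degree m in the variables z_j, j ∈ A. -/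
open Finset


variable {ι : Type*} [DecidableEq ι] (z : ι → ℂ)

noncomputable def Esym (A : Finset ι) (m : ℕ) : ℂ := ∑ J ∈ A.powersetCard m, ∏ j ∈ J, z j

lemma Esym_insert {A : Finset ι} {a : ι} (ha : a ∉ A) (m : ℕ) :
    Esym z (insert a A) (m+1) = Esym z A (m+1) + z a * Esym z A m := by
  unfold Esym
  rw [powersetCard_succ_insert ha, sum_union, sum_image]
  · congr 1
    rw [mul_sum]
    refine sum_congr rfl fun J hJ => ?_
    rw [mem_powersetCard] at hJ
    rw [prod_insert (fun h => ha (hJ.1 h))]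
  · intro J hJ K hK h
    rw [mem_coe, mem_powersetCard] at hJ hK
    have := congrArg (fun S => Finset.erase S a) h
    simpa [erase_insert (fun h => ha (hJ.1 h)), erase_insert (fun h => ha (hK.1 h))] using this
  · rw [disjoint_right]
    intro J hJ hJ'
    simp only [mem_image] at hJ
    obtain ⟨K, hK, rfl⟩ := hJ
    rw [mem_powersetCard] at hJ'
    exact ha (hJ'.1 (mem_insert_self a K))

lemma sum_mul_Esym_erase (t : Finset ι) (m : ℕ) :
    ∑ u ∈ t, z u * Esym z (t.erase u) m = ((m+1 : ℕ) : ℂ) * Esym z t (m+1) := by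
  unfold Esym
  have lhs : ∑ u ∈ t, z u * ∑ J ∈ (t.erase u).powersetCard m, ∏ j ∈ J, z j
      = ∑ u ∈ t, ∑ J ∈ (t.erase u).powersetCard m, ∏ j ∈ insert u J, z j := by
    refine sum_congr rfl fun u hu => ?_
    rw [mul_sum]
    refine sum_congr rfl fun J hJ => ?_
    rw [mem_powersetCard] at hJ
    rw [prod_insert (fun h => (mem_erase.1 (hJ.1 h)).1 rfl)]
  have rhs : ((m+1 : ℕ) : ℂ) * ∑ S ∈ t.powersetCard (m+1), ∏ j ∈ S, z j
      = ∑ S ∈ t.powersetCard (m+1), ∑ _u ∈ S, ∏ j ∈ S, z j := by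
    rw [mul_sum]
    refine sum_congr rfl fun S hS => ?_
    rw [mem_powersetCard] at hS
    rw [sum_const, hS.2, nsmul_eq_mul]
  rw [lhs, rhs, sum_sigma', sum_sigma']
  refine sum_nbij' (fun p => ⟨insert p.1 p.2, p.1⟩) (fun p => ⟨p.2, p.1.erase p.2⟩)
    ?_ ?_ ?_ ?_ ?_
  · rintro ⟨u, J⟩ hp
    simp only [mem_sigma, mem_powersetCard] at hp ⊢
    obtain ⟨hu, hJ, hc⟩ := hp
    have huJ : u ∉ J := fun h => (mem_erase.1 (hJ h)).1 rfl
    refine ⟨⟨?_, ?_⟩, mem_insert_self _ _⟩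
    · exact insert_subset hu ((hJ.trans (erase_subset _ _)))
    · rw [card_insert_of_notMem huJ, hc]
  · rintro ⟨S, u⟩ hp
    simp only [mem_sigma, mem_powersetCard] at hp ⊢
    obtain ⟨⟨hS, hc⟩, hu⟩ := hp
    refine ⟨hS hu, ?_, ?_⟩
    · intro x hx
      rw [mem_erase] at hx ⊢
      exact ⟨hx.1, hS hx.2⟩
    · rw [card_erase_of_mem hu, hc]; rfl
  · rintro ⟨u, J⟩ hp
    simp only [mem_sigma, mem_powersetCard] at hp
    obtain ⟨hu, hJ, hc⟩ := hp
    have huJ : u ∉ J := fun h => (mem_erase.1 (hJ h)).1 rfl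
    simp [erase_insert huJ]
  · rintro ⟨S, u⟩ hp
    simp only [mem_sigma, mem_powersetCard] at hp
    simp [insert_erase hp.2]
  · rintro ⟨u, J⟩ hp
    rfl

lemma sum_Esym_erase (t : Finset ι) (m : ℕ) :
    ∑ u ∈ t, Esym z (t.erase u) m = ((t.card - m : ℕ) : ℂ) * Esym z t m := by
  unfold Esym
  have key : ∀ u, (t.erase u).powersetCard m
      = (t.powersetCard m).filter (fun J => u ∉ J) := by
    intro u
    ext J
    simp only [mem_powersetCard, mem_filter, subset_erase]
    tauto
  simp_rw [key, sum_filter]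
  rw [sum_comm, mul_sum]
  refine sum_congr rfl fun J hJ => ?_
  rw [mem_powersetCard] at hJ
  rw [sum_ite, sum_const, sum_const_zero, add_zero, nsmul_eq_mul]
  congr 2
  rw [filter_not, filter_mem_eq_inter, (inter_eq_right).2 hJ.1,
    card_sdiff_of_subset hJ.1, hJ.2]

lemma keyK (s : Finset ι) {k : ℕ} (hk : 2 ≤ k) :
    ∑ u ∈ s, ∑ v ∈ s,
        (if u ≠ v then (z u - z v)^2 * Esym z ((s.erase u).erase v) (k-2) else 0)
    = 2 * ((s.card - (k-1) : ℕ) : ℂ) * (∑ u ∈ s, z u^2 * Esym z (s.erase u) (k-2))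
      - 2 * ((k*(k-1) : ℕ) : ℂ) * Esym z s k := by
  have h1 : ∀ u ∈ s, ∑ v ∈ s,
      (if u ≠ v then (z u - z v)^2 * Esym z ((s.erase u).erase v) (k-2) else 0)
      = ∑ v ∈ s.erase u, (z u - z v)^2 * Esym z ((s.erase u).erase v) (k-2) := by
    intro u _
    rw [← sum_filter]
    congr 1
    ext v
    simp only [mem_filter, mem_erase, ne_eq]
    tauto
  rw [sum_congr rfl h1]
  have expand : ∀ u v : ι, (z u - z v)^2 * Esym z ((s.erase u).erase v) (k-2)
      = (z u^2 * Esym z ((s.erase u).erase v) (k-2)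
        + z v^2 * Esym z ((s.erase u).erase v) (k-2))
        - 2 * (z u * (z v * Esym z ((s.erase u).erase v) (k-2))) := by
    intro u v; ring
  simp_rw [expand, sum_sub_distrib, sum_add_distrib]
  -- cross term
  have hA : ∑ u ∈ s, ∑ v ∈ s.erase u, z u * (z v * Esym z ((s.erase u).erase v) (k-2))
      = ((k*(k-1) : ℕ) : ℂ) * Esym z s k := by
    have inner : ∀ u ∈ s, ∑ v ∈ s.erase u, z u * (z v * Esym z ((s.erase u).erase v) (k-2))
        = z u * (((k-1 : ℕ):ℂ) * Esym z (s.erase u) (k-1)) := by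
      intro u _
      rw [← mul_sum, sum_mul_Esym_erase, show ((k-2)+1 : ℕ) = k-1 from by omega]
    rw [sum_congr rfl inner]
    have : ∀ u ∈ s, z u * (((k-1:ℕ):ℂ) * Esym z (s.erase u) (k-1))
        = ((k-1:ℕ):ℂ) * (z u * Esym z (s.erase u) (k-1)) := fun u _ => by ring
    rw [sum_congr rfl this, ← mul_sum, sum_mul_Esym_erase]
    have h1 : ((k-1)+1 : ℕ) = k := by omega
    have h2 : ((k-1)+1 : ℕ) = k := by omega
    rw [h1]
    push_cast [Nat.sub_one, Nat.cast_pred (by omega : 0 < k)]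
    ring
  -- square terms
  have hB : ∑ u ∈ s, ∑ v ∈ s.erase u, z u^2 * Esym z ((s.erase u).erase v) (k-2)
      = ((s.card - (k-1) : ℕ) : ℂ) * ∑ u ∈ s, z u^2 * Esym z (s.erase u) (k-2) := by
    have inner : ∀ u ∈ s, ∑ v ∈ s.erase u, z u^2 * Esym z ((s.erase u).erase v) (k-2)
        = ((s.card - (k-1) : ℕ) : ℂ) * (z u^2 * Esym z (s.erase u) (k-2)) := by
      intro u hu
      rw [← mul_sum, sum_Esym_erase, card_erase_of_mem hu]
      have : (s.card - 1 - (k-2) : ℕ) = (s.card - (k-1) : ℕ) := by omega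
      rw [this]; ring
    rw [sum_congr rfl inner, ← mul_sum]
  have hC : ∑ u ∈ s, ∑ v ∈ s.erase u, z v^2 * Esym z ((s.erase u).erase v) (k-2)
      = ((s.card - (k-1) : ℕ) : ℂ) * ∑ u ∈ s, z u^2 * Esym z (s.erase u) (k-2) := by
    rw [sum_comm' (t' := s) (s' := fun v => s.erase v)]
    · simp_rw [fun u v : ι => (Finset.erase_right_comm : (s.erase u).erase v = (s.erase v).erase u)]
      exact hB
    · intro u v
      simp only [mem_erase, ne_eq]
      tauto
  have h2A : ∑ u ∈ s, ∑ v ∈ s.erase u, 2 * (z u * (z v * Esym z ((s.erase u).erase v) (k-2)))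
      = 2 * ∑ u ∈ s, ∑ v ∈ s.erase u, z u * (z v * Esym z ((s.erase u).erase v) (k-2)) := by
    rw [mul_sum]
    exact sum_congr rfl fun u _ => by rw [mul_sum]
  rw [h2A, hA, hB, hC]
  ring

lemma Esym_zero (s : Finset ι) : Esym z s 0 = 1 := by
  unfold Esym; rw [powersetCard_zero, sum_singleton, prod_empty]

lemma Esym_one (s : Finset ι) : Esym z s 1 = ∑ u ∈ s, z u := by
  have h := sum_mul_Esym_erase z s 0
  simp only [Esym_zero, mul_one, Nat.cast_one, zero_add, Nat.cast_ofNat] at h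
  rw [h, one_mul]

lemma Esym_card (s : Finset ι) : Esym z s s.card = ∏ j ∈ s, z j := by
  unfold Esym; rw [powersetCard_self, sum_singleton]

lemma e1_mul (s : Finset ι) {k : ℕ} (hk : 2 ≤ k) :
    (∑ u ∈ s, z u) * Esym z s (k-1)
    = (k:ℂ) * Esym z s k + ∑ u ∈ s, z u^2 * Esym z (s.erase u) (k-2) := by
  rw [sum_mul]
  have split : ∀ u ∈ s, z u * Esym z s (k-1)
      = z u * Esym z (s.erase u) (k-1) + z u^2 * Esym z (s.erase u) (k-2) := by
    intro u hu
    have h : Esym z s (k-1) = Esym z (s.erase u) (k-1) + z u * Esym z (s.erase u) (k-2) := by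
      conv_lhs => rw [← insert_erase hu, show (k-1:ℕ) = (k-2)+1 from by omega,
        Esym_insert z (notMem_erase u s)]
      rw [show (k-2)+1 = k-1 from by omega]
    rw [h]; ring
  rw [sum_congr rfl split, sum_add_distrib, sum_mul_Esym_erase,
    show ((k-1)+1:ℕ) = k from by omega]

/-- Dougall's identity: expansion of the difference between a product
and the `n`-th power of the arithmetic mean. -/
theorem stmt_3 (n : ℕ) (hn : 1 ≤ n) (z : Fin n → ℂ)
    (zt : ℂ) (hzt : zt = (1 / (n : ℂ)) * ∑ j : Fin n, z j) :
    (∏ j : Fin n, z j) - zt ^ n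
    = -(1 / (2 * (n : ℂ))) * ∑ u : Fin n, ∑ v : Fin n,
        if u ≠ v then
          (z u - z v) ^ 2 *
            ∑ k ∈ Finset.Icc 2 n,
              (zt ^ (n - k) / ((k : ℂ) * (n.choose k : ℂ))) *
                ∑ J ∈ ((univ : Finset (Fin n)) \ {u, v}).powersetCard (k - 2),
                  ∏ j ∈ J, z j
        else 0 := by
  have hn0 : (n:ℂ) ≠ 0 := Nat.cast_ne_zero.2 (by omega)
  have he1 : (∑ j : Fin n, z j) = (n:ℂ) * zt := by rw [hzt]; field_simp
  set f : ℕ → ℂ := fun j => zt^(n-j) * Esym z univ j / (n.choose j) with hf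
  -- rewrite the double-sum set and recognize Esym
  have hset : ∀ u v : Fin n, ((univ : Finset (Fin n)) \ {u, v}) = (univ.erase u).erase v := by
    intro u v; ext x
    simp only [mem_sdiff, mem_univ, mem_insert, mem_singleton, mem_erase, ne_eq, true_and,
      and_true]
    tauto
  have hE : ∀ (A : Finset (Fin n)) (m : ℕ), (∑ J ∈ A.powersetCard m, ∏ j ∈ J, z j)
      = Esym z A m := fun A m => rfl
  simp_rw [hset, hE]
  -- push the k-sum outside
  have h1 : ∀ u v : Fin n,
      (if u ≠ v then (z u - z v)^2 * ∑ k ∈ Finset.Icc 2 n,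
          (zt ^ (n - k) / ((k : ℂ) * (n.choose k : ℂ))) * Esym z ((univ.erase u).erase v) (k-2)
        else 0)
      = ∑ k ∈ Finset.Icc 2 n, (zt ^ (n - k) / ((k : ℂ) * (n.choose k : ℂ))) *
          (if u ≠ v then (z u - z v)^2 * Esym z ((univ.erase u).erase v) (k-2) else 0) := by
    intro u v
    split
    · rw [mul_sum]; exact sum_congr rfl fun k _ => by ring
    · simp
  simp_rw [h1]
  rw [show (∑ u : Fin n, ∑ v : Fin n, ∑ k ∈ Finset.Icc 2 n,
        (zt ^ (n - k) / ((k : ℂ) * (n.choose k : ℂ))) *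
          (if u ≠ v then (z u - z v)^2 * Esym z ((univ.erase u).erase v) (k-2) else 0))
      = ∑ k ∈ Finset.Icc 2 n, ∑ u : Fin n, ∑ v : Fin n,
        (zt ^ (n - k) / ((k : ℂ) * (n.choose k : ℂ))) *
          (if u ≠ v then (z u - z v)^2 * Esym z ((univ.erase u).erase v) (k-2) else 0) from
    (sum_congr rfl fun u _ => sum_comm).trans sum_comm]
  rw [mul_sum]
  -- per-k identity
  have perk : ∀ k ∈ Finset.Icc 2 n,
      -(1 / (2 * (n : ℂ))) * ∑ u : Fin n, ∑ v : Fin n,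
        (zt ^ (n - k) / ((k : ℂ) * (n.choose k : ℂ))) *
          (if u ≠ v then (z u - z v)^2 * Esym z ((univ.erase u).erase v) (k-2) else 0)
      = f k - f (k-1) := by
    intro k hk
    rw [mem_Icc] at hk
    obtain ⟨hk2, hkn⟩ := hk
    have hpull : ∑ u : Fin n, ∑ v : Fin n,
        (zt ^ (n - k) / ((k : ℂ) * (n.choose k : ℂ))) *
          (if u ≠ v then (z u - z v)^2 * Esym z ((univ.erase u).erase v) (k-2) else 0)
        = (zt ^ (n - k) / ((k : ℂ) * (n.choose k : ℂ))) *
          ∑ u : Fin n, ∑ v : Fin n,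
            (if u ≠ v then (z u - z v)^2 * Esym z ((univ.erase u).erase v) (k-2) else 0) := by
      rw [mul_sum]
      exact sum_congr rfl fun u _ => by rw [mul_sum]
    rw [hpull, keyK z univ hk2]
    rw [card_univ, Fintype.card_fin]
    have hQ : ∑ u : Fin n, z u^2 * Esym z (univ.erase u) (k-2)
        = (n:ℂ) * zt * Esym z univ (k-1) - (k:ℂ) * Esym z univ k := by
      have := e1_mul z (univ : Finset (Fin n)) hk2
      rw [he1] at this
      linear_combination -this
    rw [hQ]
    -- now pure algebra
    have hC0 : ((n.choose k : ℕ):ℂ) ≠ 0 := Nat.cast_ne_zero.2 (Nat.choose_pos hkn).ne'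
    have hC0' : ((n.choose (k-1) : ℕ):ℂ) ≠ 0 :=
      Nat.cast_ne_zero.2 (Nat.choose_pos (by omega)).ne'
    have hk0 : (k:ℂ) ≠ 0 := Nat.cast_ne_zero.2 (by omega)
    have ha : ((n-(k-1):ℕ):ℂ) = (n:ℂ) - k + 1 := by
      rw [Nat.cast_sub (by omega), Nat.cast_sub (by omega), Nat.cast_one]; ring
    have hb : ((k*(k-1):ℕ):ℂ) = (k:ℂ) * ((k:ℂ)-1) := by
      rw [Nat.cast_mul, Nat.cast_sub (by omega), Nat.cast_one]
    have hp : zt^(n-(k-1)) = zt^(n-k) * zt := by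
      rw [← pow_succ, show (n-k)+1 = n-(k-1) from by omega]
    have hcc : (k:ℂ) * (n.choose k:ℂ) = ((n:ℂ)-k+1) * (n.choose (k-1):ℂ) := by
      have h := Nat.choose_succ_right_eq n (k-1)
      rw [show (k-1)+1 = k from by omega] at h
      have h2 : (n.choose k : ℂ) * (k:ℂ) = (n.choose (k-1):ℂ) * ((n - (k-1) : ℕ):ℂ) := by
        exact_mod_cast congrArg (Nat.cast : ℕ → ℂ) h
      rw [ha] at h2
      linear_combination h2
    simp only [hf]
    rw [ha, hb, hp]
    field_simp
    linear_combination (zt * zt^(n-k) * (n:ℂ) * Esym z Finset.univ (k-1)) * hcc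
  rw [sum_congr rfl perk]
  -- telescoping
  have htel : ∑ k ∈ Finset.Icc 2 n, (f k - f (k-1)) = f n - f 1 := by
    rw [← Finset.Ico_add_one_right_eq_Icc, Finset.sum_Ico_eq_sum_range]
    have hterm : ∀ i, f (2+i) - f ((2+i)-1) = f (1+(i+1)) - f (1+i) := by
      intro i
      congr 2 <;> omega
    rw [sum_congr rfl fun i _ => hterm i, Finset.sum_range_sub (fun j => f (1+j))]
    rw [show 1+(n+1-2) = n from by omega, show (1+0) = 1 from rfl]
  rw [htel]
  have hfn : f n = ∏ j : Fin n, z j := by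
    simp only [hf, Nat.sub_self, pow_zero, Nat.choose_self, Nat.cast_one, div_one, one_mul]
    rw [← Esym_card z univ, card_univ, Fintype.card_fin]
  have hf1 : f 1 = zt ^ n := by
    simp only [hf, Nat.choose_one_right, Esym_one, he1]
    rw [mul_comm ((n:ℂ)) zt, mul_div_assoc, mul_div_assoc, div_self hn0, mul_one,
      ← pow_succ, show n - 1 + 1 = n from by omega]
  rw [hfn, hf1]
end

section
/- Let 1 ≤ n ≤ N, Z = (z_{j,r}) an N×n complex matrix, z̃_r = (1/N)∑_{j=1}^N z_{j,r}, y_{u,v,r} = z_{u,r} − z_{v,r}. For R ⊆ {1,…,n} let p̄_R = ∑_{j ∈ Inj([n],[N])} ∏_{r∈R} z_{j(r),r} (sum over injections from {1,…,n} to {1,…,N}) and p̃_R = ∏_{r∈R} z̃_r. Then for any R ⊆ {1,…,n} and r ∈ {1,…,n}∖R: p̄_{R∪{r}} − z̃_r · p̄_R = −(1/(2N)) · ∑_{s∈R} ∑_{j ∈ Inj([n],[N])} y_{j(r),j(s),r} · y_{j(r),j(s),s} · ∏_{ℓ∈R∖{s}} z_{j(ℓ),ℓ}. -/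
open Finset

/-- The "off-image" part of the double sum vanishes, by the involution swapping `j r` and `i`. -/
lemma aux_zero (N n : ℕ) (z : Fin N → Fin n → ℂ) (R : Finset (Fin n)) (r : Fin n)
    (hr : r ∉ R) :
    ∑ j : Fin n ↪ Fin N, ∑ i ∈ (insert (j r) (R.image j))ᶜ,
      (z (j r) r - z i r) * ∏ ℓ ∈ R, z (j ℓ) ℓ = 0 := by
  classical
  rw [Finset.sum_sigma']
  refine Finset.sum_involution
    (fun p _ => ⟨p.1.trans (Equiv.swap (p.1 r) p.2).toEmbedding, p.1 r⟩) ?_ ?_ ?_ ?_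
  · rintro ⟨j, i⟩ hp
    dsimp only
    simp only [Finset.mem_sigma, Finset.mem_univ, Finset.mem_compl, Finset.mem_insert,
      Finset.mem_image, true_and, not_or, not_exists] at hp
    obtain ⟨hi1, hi2⟩ := hp
    have hjr : (j.trans (Equiv.swap (j r) i).toEmbedding) r = i := by
      simp [Function.Embedding.trans_apply]
    have hjl : ∀ ℓ ∈ R, (j.trans (Equiv.swap (j r) i).toEmbedding) ℓ = j ℓ := by
      intro ℓ hℓ
      have h1 : j ℓ ≠ j r := fun h => hr (j.injective h ▸ hℓ)
      have h2 : j ℓ ≠ i := fun h => hi2 ℓ ⟨hℓ, h⟩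
      simp [Function.Embedding.trans_apply, Equiv.swap_apply_of_ne_of_ne h1 h2]
    have hprod : ∏ ℓ ∈ R, z ((j.trans (Equiv.swap (j r) i).toEmbedding) ℓ) ℓ
        = ∏ ℓ ∈ R, z (j ℓ) ℓ :=
      Finset.prod_congr rfl fun ℓ hℓ => by rw [hjl ℓ hℓ]
    rw [hjr, hprod]
    ring
  · rintro ⟨j, i⟩ hp _
    dsimp only
    simp only [Finset.mem_sigma, Finset.mem_univ, Finset.mem_compl, Finset.mem_insert,
      true_and, not_or] at hp
    intro h
    exact hp.1 (congrArg Sigma.snd h).symm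
  · rintro ⟨j, i⟩ hp
    dsimp only
    simp only [Finset.mem_sigma, Finset.mem_univ, Finset.mem_compl, Finset.mem_insert,
      Finset.mem_image, true_and, not_or, not_exists] at hp ⊢
    obtain ⟨hi1, hi2⟩ := hp
    have hjr : (j.trans (Equiv.swap (j r) i).toEmbedding) r = i := by
      simp [Function.Embedding.trans_apply]
    have hjl : ∀ ℓ ∈ R, (j.trans (Equiv.swap (j r) i).toEmbedding) ℓ = j ℓ := by
      intro ℓ hℓ
      have h1 : j ℓ ≠ j r := fun h => hr (j.injective h ▸ hℓ)
      have h2 : j ℓ ≠ i := fun h => hi2 ℓ ⟨hℓ, h⟩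
      simp [Function.Embedding.trans_apply, Equiv.swap_apply_of_ne_of_ne h1 h2]
    constructor
    · rw [hjr]; exact fun h => hi1 h.symm
    · intro ℓ h
      obtain ⟨hℓ, heq⟩ := h
      rw [hjl ℓ hℓ] at heq
      exact hr (j.injective heq ▸ hℓ)
  · rintro ⟨j, i⟩ hp
    dsimp only
    simp only [Finset.mem_sigma, Finset.mem_univ, Finset.mem_compl, Finset.mem_insert,
      Finset.mem_image, true_and, not_or, not_exists] at hp
    obtain ⟨hi1, hi2⟩ := hp
    have hjr : (j.trans (Equiv.swap (j r) i).toEmbedding) r = i := by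
      simp [Function.Embedding.trans_apply]
    have h1 : (j.trans (Equiv.swap (j r) i).toEmbedding).trans
        (Equiv.swap ((j.trans (Equiv.swap (j r) i).toEmbedding) r) (j r)).toEmbedding = j := by
      rw [hjr]
      ext x
      simp only [Function.Embedding.trans_apply, Equiv.coe_toEmbedding]
      rw [Equiv.swap_comm i (j r), Equiv.swap_apply_self]
    exact Sigma.ext h1 (heq_of_eq hjr)

lemma aux_sym (N n : ℕ) (z : Fin N → Fin n → ℂ) (R : Finset (Fin n)) (r s : Fin n)
    (hr : r ∉ R) (hs : s ∈ R) :
    (2:ℂ) * ∑ j : Fin n ↪ Fin N,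
        (z (j r) r - z (j s) r) * (z (j s) s * ∏ ℓ ∈ R.erase s, z (j ℓ) ℓ)
    = - ∑ j : Fin n ↪ Fin N,
        (z (j r) r - z (j s) r) * (z (j r) s - z (j s) s) * ∏ ℓ ∈ R.erase s, z (j ℓ) ℓ := by
  classical
  have hrs : r ≠ s := fun h => hr (h ▸ hs)
  set σ : (Fin n ↪ Fin N) ≃ (Fin n ↪ Fin N) :=
    Equiv.embeddingCongr (Equiv.swap r s) (Equiv.refl (Fin N)) with hσ
  have happ : ∀ (j : Fin n ↪ Fin N) (x : Fin n), (σ j) x = j (Equiv.swap r s x) := by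
    intro j x
    simp [hσ, Function.Embedding.congr]
  have hσr : ∀ j : Fin n ↪ Fin N, (σ j) r = j s := by
    intro j; rw [happ, Equiv.swap_apply_left]
  have hσs : ∀ j : Fin n ↪ Fin N, (σ j) s = j r := by
    intro j; rw [happ, Equiv.swap_apply_right]
  have hσl : ∀ (j : Fin n ↪ Fin N), ∀ ℓ ∈ R.erase s, (σ j) ℓ = j ℓ := by
    intro j ℓ hℓ
    have h1 : ℓ ≠ s := (Finset.mem_erase.mp hℓ).1
    have h2 : ℓ ≠ r := fun h => hr (h ▸ (Finset.mem_erase.mp hℓ).2)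
    rw [happ, Equiv.swap_apply_of_ne_of_ne h2 h1]
  have hcomp : (∑ j : Fin n ↪ Fin N,
        (z (j r) r - z (j s) r) * (z (j s) s * ∏ ℓ ∈ R.erase s, z (j ℓ) ℓ))
      = ∑ j : Fin n ↪ Fin N,
        (z (j s) r - z (j r) r) * (z (j r) s * ∏ ℓ ∈ R.erase s, z (j ℓ) ℓ) := by
    rw [← Equiv.sum_comp σ (fun j => (z (j r) r - z (j s) r) *
        (z (j s) s * ∏ ℓ ∈ R.erase s, z (j ℓ) ℓ))]
    refine Finset.sum_congr rfl fun j _ => ?_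
    rw [hσr, hσs, Finset.prod_congr rfl (fun ℓ hℓ => by rw [hσl j ℓ hℓ] :
      ∀ ℓ ∈ R.erase s, z ((σ j) ℓ) ℓ = z (j ℓ) ℓ)]
  calc (2:ℂ) * ∑ j : Fin n ↪ Fin N,
        (z (j r) r - z (j s) r) * (z (j s) s * ∏ ℓ ∈ R.erase s, z (j ℓ) ℓ)
      = (∑ j : Fin n ↪ Fin N,
          (z (j r) r - z (j s) r) * (z (j s) s * ∏ ℓ ∈ R.erase s, z (j ℓ) ℓ))
        + ∑ j : Fin n ↪ Fin N,
          (z (j s) r - z (j r) r) * (z (j r) s * ∏ ℓ ∈ R.erase s, z (j ℓ) ℓ) := by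
        rw [← hcomp]; ring
    _ = - ∑ j : Fin n ↪ Fin N,
          (z (j r) r - z (j s) r) * (z (j r) s - z (j s) s) * ∏ ℓ ∈ R.erase s, z (j ℓ) ℓ := by
        rw [← Finset.sum_add_distrib, ← Finset.sum_neg_distrib]
        exact Finset.sum_congr rfl fun j _ => by ring

/-- Corollary 5: `p̄_{R∪{r}} − z̃_r·p̄_R` expansion. -/
theorem stmt_4 (N n : ℕ) (hn : 1 ≤ n) (hnN : n ≤ N) (z : Fin N → Fin n → ℂ)
    (R : Finset (Fin n)) (r : Fin n) (hr : r ∉ R) :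
    (∑ j : Fin n ↪ Fin N, ∏ ℓ ∈ insert r R, z (j ℓ) ℓ)
      - ((1 / (N : ℂ)) * ∑ i : Fin N, z i r) *
          ∑ j : Fin n ↪ Fin N, ∏ ℓ ∈ R, z (j ℓ) ℓ
    = -(1 / (2 * (N : ℂ))) *
        ∑ s ∈ R, ∑ j : Fin n ↪ Fin N,
          (z (j r) r - z (j s) r) * (z (j r) s - z (j s) s) *
            ∏ ℓ ∈ R.erase s, z (j ℓ) ℓ := by
  classical
  have hN0 : 0 < N := lt_of_lt_of_le hn hnN
  have hN : (N:ℂ) ≠ 0 := Nat.cast_ne_zero.mpr hN0.ne'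
  -- per-row split of the i-sum
  have hsplit : ∀ j : Fin n ↪ Fin N,
      ∑ i : Fin N, (z (j r) r - z i r) * ∏ ℓ ∈ R, z (j ℓ) ℓ
      = (∑ s ∈ R, (z (j r) r - z (j s) r) * (z (j s) s * ∏ ℓ ∈ R.erase s, z (j ℓ) ℓ))
        + ∑ i ∈ (insert (j r) (R.image j))ᶜ,
            (z (j r) r - z i r) * ∏ ℓ ∈ R, z (j ℓ) ℓ := by
    intro j
    have hjrR : j r ∉ R.image j := by
      simp only [Finset.mem_image, not_exists]
      rintro ℓ ⟨h1, h2⟩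
      exact hr ((j.injective h2) ▸ h1)
    rw [← Finset.sum_add_sum_compl (insert (j r) (R.image j))
      (fun i => (z (j r) r - z i r) * ∏ ℓ ∈ R, z (j ℓ) ℓ)]
    congr 1
    rw [Finset.sum_insert hjrR, sub_self, zero_mul, zero_add,
      Finset.sum_image (fun a _ b _ h => j.injective h)]
    refine Finset.sum_congr rfl fun s hs => ?_
    rw [← Finset.mul_prod_erase R (fun ℓ => z (j ℓ) ℓ) hs]
  -- row sum evaluates
  have hrow : ∀ j : Fin n ↪ Fin N,
      ∑ i : Fin N, (z (j r) r - z i r) * ∏ ℓ ∈ R, z (j ℓ) ℓ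
      = (N:ℂ) * (z (j r) r * ∏ ℓ ∈ R, z (j ℓ) ℓ)
        - (∑ i : Fin N, z i r) * ∏ ℓ ∈ R, z (j ℓ) ℓ := by
    intro j
    rw [← Finset.sum_mul, Finset.sum_sub_distrib, Finset.sum_const, Finset.card_univ,
      Fintype.card_fin, nsmul_eq_mul]
    ring
  -- total double sum, two ways
  have total : ∑ j : Fin n ↪ Fin N, ∑ i : Fin N,
        (z (j r) r - z i r) * ∏ ℓ ∈ R, z (j ℓ) ℓ
      = ∑ s ∈ R, ∑ j : Fin n ↪ Fin N,
          (z (j r) r - z (j s) r) * (z (j s) s * ∏ ℓ ∈ R.erase s, z (j ℓ) ℓ) := by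
    rw [Finset.sum_congr rfl (fun j _ => hsplit j), Finset.sum_add_distrib,
      aux_zero N n z R r hr, add_zero, Finset.sum_comm]
  have total2 : ∑ j : Fin n ↪ Fin N, ∑ i : Fin N,
        (z (j r) r - z i r) * ∏ ℓ ∈ R, z (j ℓ) ℓ
      = (N:ℂ) * (∑ j : Fin n ↪ Fin N, ∏ ℓ ∈ insert r R, z (j ℓ) ℓ)
        - (∑ i : Fin N, z i r) * ∑ j : Fin n ↪ Fin N, ∏ ℓ ∈ R, z (j ℓ) ℓ := by
    rw [Finset.sum_congr rfl (fun j _ => hrow j), Finset.sum_sub_distrib, ← Finset.mul_sum,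
      ← Finset.mul_sum]
    congr 2
    exact Finset.sum_congr rfl fun j _ => by rw [Finset.prod_insert hr]
  have hhalf : ∑ s ∈ R, ∑ j : Fin n ↪ Fin N,
        (z (j r) r - z (j s) r) * (z (j s) s * ∏ ℓ ∈ R.erase s, z (j ℓ) ℓ)
      = -(1/2 : ℂ) * ∑ s ∈ R, ∑ j : Fin n ↪ Fin N,
          (z (j r) r - z (j s) r) * (z (j r) s - z (j s) s) * ∏ ℓ ∈ R.erase s, z (j ℓ) ℓ := by
    rw [Finset.mul_sum]
    refine Finset.sum_congr rfl fun s hs => ?_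
    have h := aux_sym N n z R r s hr hs
    linear_combination h / 2
  have key : (N:ℂ) * (∑ j : Fin n ↪ Fin N, ∏ ℓ ∈ insert r R, z (j ℓ) ℓ)
        - (∑ i : Fin N, z i r) * ∑ j : Fin n ↪ Fin N, ∏ ℓ ∈ R, z (j ℓ) ℓ
      = -(1/2 : ℂ) * ∑ s ∈ R, ∑ j : Fin n ↪ Fin N,
          (z (j r) r - z (j s) r) * (z (j r) s - z (j s) s) * ∏ ℓ ∈ R.erase s, z (j ℓ) ℓ := by
    rw [← total2, total, hhalf]
  have e1 : (1/(N:ℂ)) * ((N:ℂ) * (∑ j : Fin n ↪ Fin N, ∏ ℓ ∈ insert r R, z (j ℓ) ℓ)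
        - (∑ i : Fin N, z i r) * ∑ j : Fin n ↪ Fin N, ∏ ℓ ∈ R, z (j ℓ) ℓ)
      = (∑ j : Fin n ↪ Fin N, ∏ ℓ ∈ insert r R, z (j ℓ) ℓ)
        - ((1 / (N : ℂ)) * ∑ i : Fin N, z i r) *
            ∑ j : Fin n ↪ Fin N, ∏ ℓ ∈ R, z (j ℓ) ℓ := by
    field_simp
  rw [← e1, key]
  ring
end

section
/- Let 3 ≤ n ≤ N, Z = (z_{j,r}) an N×n complex matrix, z̃_t = (1/N)∑_{j=1}^N z_{j,t}, y_{u,v,r} = z_{u,r} − z_{v,r}. Let R ⊆ {1,…,n} with |R| ≤ n−3 and let r,s,t be pairwise distinct elements of {1,…,n}∖R. Writing p_{j,S} = ∏_{ℓ∈S} z_{j(ℓ),ℓ}, one has ∑_{j∈Inj([n],[N])} y_{j(r),j(s),r}·y_{j(r),j(s),s}·(p_{j,R∪{t}} − z̃_t·p_{j,R}) = (2/N)·∑_{j∈Inj([n],[N])} y_{j(r),j(s),r}·y_{j(r),j(s),s}·y_{j(t),j(r),t}·p_{j,R} − (1/(2N))·∑_{q∈R} ∑_{j∈Inj([n],[N])}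 y_{j(r),j(s),r}·y_{j(r),j(s),s}·y_{j(t),j(q),t}·y_{j(t),j(q),q}·p_{j,R∖{q}}. -/
open Finset

namespace Stmt6Aux

variable {N n : ℕ}

/-- Precomposition with a swap, as an equivalence of embeddings. -/
def swapEquiv (a b : Fin n) : (Fin n ↪ Fin N) ≃ (Fin n ↪ Fin N) where
  toFun j := (Equiv.swap a b).toEmbedding.trans j
  invFun j := (Equiv.swap a b).toEmbedding.trans j
  left_inv j := by ext x; simp
  right_inv j := by ext x; simp

lemma sum_swap_reindex (a b : Fin n) (g : (Fin n ↪ Fin N) → ℂ) :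
    ∑ j : Fin n ↪ Fin N, g j
      = ∑ j : Fin n ↪ Fin N, g ((Equiv.swap a b).toEmbedding.trans j) :=
  (Equiv.sum_comp (swapEquiv a b) g).symm

lemma sum_eq_zero_of_swap_neg (a b : Fin n) (g : (Fin n ↪ Fin N) → ℂ)
    (h : ∀ j, g ((Equiv.swap a b).toEmbedding.trans j) = - g j) :
    ∑ j : Fin n ↪ Fin N, g j = 0 := by
  have h1 : ∑ j : Fin n ↪ Fin N, g j = - ∑ j : Fin n ↪ Fin N, g j := by
    calc ∑ j : Fin n ↪ Fin N, g j
        = ∑ j : Fin n ↪ Fin N, g ((Equiv.swap a b).toEmbedding.trans j) :=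
          sum_swap_reindex a b g
      _ = ∑ j : Fin n ↪ Fin N, - g j := Finset.sum_congr rfl fun j _ => h j
      _ = - ∑ j : Fin n ↪ Fin N, g j := by rw [Finset.sum_neg_distrib]
  linear_combination h1 / 2

/-- The off-image part vanishes by the swap involution. -/
lemma offimage_zero (w : Fin N → Fin n → ℂ) (t : Fin n) (C : (Fin n ↪ Fin N) → ℂ)
    (hC : ∀ j j' : Fin n ↪ Fin N, (∀ x, x ≠ t → j x = j' x) → C j = C j') :
    ∑ j : Fin n ↪ Fin N, ∑ u ∈ univ \ univ.map j,
      C j * (w (j t) t - w u t) = 0 := by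
  classical
  rw [Finset.sum_sigma']
  refine Finset.sum_involution
    (fun a ha => ⟨Function.Embedding.setValue a.1 t a.2, a.1 t⟩) ?_ ?_ ?_ ?_
  · rintro ⟨j, u⟩ ha
    simp only [Finset.mem_sigma, Finset.mem_univ, Finset.mem_sdiff, Finset.mem_map,
      true_and, not_exists] at ha
    have hju : ∀ x, j x ≠ u := fun x => ha x
    have hCeq : C (Function.Embedding.setValue j t u) = C j := by
      refine hC _ _ fun x hx => Function.Embedding.setValue_eq_of_ne hx (hju x)
    have hval : (Function.Embedding.setValue j t u) t = u :=
      Function.Embedding.setValue_eq j t u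
    simp only [hCeq, hval]
    ring
  · rintro ⟨j, u⟩ ha hf
    simp only [Finset.mem_sigma, Finset.mem_univ, Finset.mem_sdiff, Finset.mem_map,
      true_and, not_exists] at ha
    intro hgg
    have : j t = u := congrArg Sigma.snd hgg
    exact ha t this
  · rintro ⟨j, u⟩ ha
    simp only [Finset.mem_sigma, Finset.mem_univ, Finset.mem_sdiff, Finset.mem_map,
      true_and, not_exists] at ha ⊢
    have hju : ∀ x, j x ≠ u := fun x hx => ha x hx
    intro x hx
    by_cases hxt : x = t
    · rw [hxt, Function.Embedding.setValue_eq] at hx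
      exact hju t hx.symm
    · rw [Function.Embedding.setValue_eq_of_ne hxt (hju x)] at hx
      exact hxt (j.injective hx)
  · rintro ⟨j, u⟩ ha
    simp only [Finset.mem_sigma, Finset.mem_univ, Finset.mem_sdiff, Finset.mem_map,
      true_and, not_exists] at ha
    have hju : ∀ x, j x ≠ u := fun x hx => ha x hx
    have hval : (Function.Embedding.setValue j t u) t = u :=
      Function.Embedding.setValue_eq j t u
    have hemb : Function.Embedding.setValue (Function.Embedding.setValue j t u) t (j t) = j := by
      ext x
      by_cases hxt : x = t
      · subst hxt; rw [Function.Embedding.setValue_eq]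
      · have h1 : (Function.Embedding.setValue j t u) x = j x :=
          Function.Embedding.setValue_eq_of_ne hxt (hju x)
        have h2 : (Function.Embedding.setValue j t u) x ≠ j t := by
          rw [h1]; exact fun h => hxt (j.injective h)
        rw [Function.Embedding.setValue_eq_of_ne hxt h2, h1]
    show (⟨Function.Embedding.setValue (Function.Embedding.setValue j t u) t (j t),
        (Function.Embedding.setValue j t u) t⟩ : Σ _ : Fin n ↪ Fin N, Fin N) = ⟨j, u⟩
    rw [hemb, hval]

end Stmt6Aux

open Stmt6Aux

/-- Lemma 8 of the paper. -/
theorem stmt_6 (N n : ℕ) (hn3 : 3 ≤ n) (hnN : n ≤ N) (z : Fin N → Fin n → ℂ)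
    (zt : Fin n → ℂ) (hzt : ∀ t, zt t = (1 / (N : ℂ)) * ∑ j : Fin N, z j t)
    (R : Finset (Fin n)) (hR : R.card ≤ n - 3)
    (r s t : Fin n) (hrs : r ≠ s) (hrt : r ≠ t) (hst : s ≠ t)
    (hr : r ∉ R) (hs : s ∉ R) (ht : t ∉ R) :
    (∑ j : Fin n ↪ Fin N,
        (z (j r) r - z (j s) r) * (z (j r) s - z (j s) s) *
          ((∏ ℓ ∈ insert t R, z (j ℓ) ℓ) - zt t * ∏ ℓ ∈ R, z (j ℓ) ℓ))
    = (2 / (N : ℂ)) *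
        ∑ j : Fin n ↪ Fin N,
          (z (j r) r - z (j s) r) * (z (j r) s - z (j s) s) *
            (z (j t) t - z (j r) t) * ∏ ℓ ∈ R, z (j ℓ) ℓ
      - (1 / (2 * (N : ℂ))) *
          ∑ q ∈ R, ∑ j : Fin n ↪ Fin N,
            (z (j r) r - z (j s) r) * (z (j r) s - z (j s) s) *
              (z (j t) t - z (j q) t) * (z (j t) q - z (j q) q) *
                ∏ ℓ ∈ R.erase q, z (j ℓ) ℓ := by
  classical
  have hN0 : (N : ℂ) ≠ 0 := by
    have : 0 < N := lt_of_lt_of_le (by omega) hnN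
    exact_mod_cast Nat.cast_ne_zero.mpr this.ne'
  set A : (Fin n ↪ Fin N) → ℂ :=
    fun j => (z (j r) r - z (j s) r) * (z (j r) s - z (j s) s) with hA
  set P : (Fin n ↪ Fin N) → ℂ := fun j => ∏ ℓ ∈ R, z (j ℓ) ℓ with hP
  set T : Fin n → ℂ :=
    fun ℓ => ∑ j : Fin n ↪ Fin N, A j * P j * (z (j t) t - z (j ℓ) t) with hT
  set U : Fin n → ℂ :=
    fun q => ∑ j : Fin n ↪ Fin N,
      (z (j r) r - z (j s) r) * (z (j r) s - z (j s) s) *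
        (z (j t) t - z (j q) t) * (z (j t) q - z (j q) q) *
          ∏ ℓ ∈ R.erase q, z (j ℓ) ℓ with hU
  have htrans : ∀ (a b : Fin n) (j : Fin n ↪ Fin N) (x : Fin n),
      ((Equiv.swap a b).toEmbedding.trans j) x = j (Equiv.swap a b x) := by
    intro a b j x; rfl
  -- Step 1 : rewrite LHS
  have main1 : (∑ j : Fin n ↪ Fin N,
        (z (j r) r - z (j s) r) * (z (j r) s - z (j s) s) *
          ((∏ ℓ ∈ insert t R, z (j ℓ) ℓ) - zt t * ∏ ℓ ∈ R, z (j ℓ) ℓ))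
      = (1 / (N : ℂ)) * ∑ ℓ : Fin n, T ℓ := by
    have step1 : (∑ j : Fin n ↪ Fin N,
          (z (j r) r - z (j s) r) * (z (j r) s - z (j s) s) *
            ((∏ ℓ ∈ insert t R, z (j ℓ) ℓ) - zt t * ∏ ℓ ∈ R, z (j ℓ) ℓ))
        = (1 / (N : ℂ)) * ∑ j : Fin n ↪ Fin N,
            A j * P j * ∑ u : Fin N, (z (j t) t - z u t) := by
      rw [Finset.mul_sum]
      refine Finset.sum_congr rfl fun j _ => ?_
      rw [Finset.prod_insert ht, hzt]
      have hsum : ∑ u : Fin N, (z (j t) t - z u t)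
          = (N : ℂ) * z (j t) t - ∑ u : Fin N, z u t := by
        rw [Finset.sum_sub_distrib, Finset.sum_const, Finset.card_univ, Fintype.card_fin,
          nsmul_eq_mul]
      rw [hsum]
      simp only [hA, hP]
      field_simp
    rw [step1]
    congr 1
    have split : ∀ j : Fin n ↪ Fin N,
        A j * P j * ∑ u : Fin N, (z (j t) t - z u t)
          = (∑ ℓ : Fin n, A j * P j * (z (j t) t - z (j ℓ) t))
            + ∑ u ∈ univ \ univ.map j, A j * P j * (z (j t) t - z u t) := by
      intro j
      have h1 : ∑ u : Fin N, (z (j t) t - z u t)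
          = (∑ u ∈ univ.map j, (z (j t) t - z u t))
            + ∑ u ∈ univ \ univ.map j, (z (j t) t - z u t) := by
        rw [add_comm, Finset.sum_sdiff (Finset.subset_univ _)]
      rw [h1, mul_add, Finset.mul_sum, Finset.mul_sum, Finset.sum_map]
    calc ∑ j : Fin n ↪ Fin N, A j * P j * ∑ u : Fin N, (z (j t) t - z u t)
        = (∑ j : Fin n ↪ Fin N, ∑ ℓ : Fin n, A j * P j * (z (j t) t - z (j ℓ) t))
          + ∑ j : Fin n ↪ Fin N, ∑ u ∈ univ \ univ.map j,
              A j * P j * (z (j t) t - z u t) := by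
          rw [← Finset.sum_add_distrib]
          exact Finset.sum_congr rfl fun j _ => split j
      _ = ∑ ℓ : Fin n, T ℓ := by
          rw [offimage_zero z t (fun j => A j * P j) ?_, add_zero, Finset.sum_comm]
          intro j j' hjj
          have hrr := hjj r hrt
          have hss := hjj s hst
          have hRR : (∏ ℓ ∈ R, z (j ℓ) ℓ) = ∏ ℓ ∈ R, z (j' ℓ) ℓ :=
            Finset.prod_congr rfl fun ℓ hℓ => by rw [hjj ℓ (fun h => ht (h ▸ hℓ))]
          simp only [hA, hP, hrr, hss, hRR]
  -- vanishing for ℓ outside R ∪ {r,s}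
  have hTzero : ∀ ℓ ∈ univ \ R, ℓ ∉ ({r, s} : Finset (Fin n)) → T ℓ = 0 := by
    intro ℓ hℓ hℓrs
    have hℓR : ℓ ∉ R := (Finset.mem_sdiff.mp hℓ).2
    simp only [Finset.mem_insert, Finset.mem_singleton, not_or] at hℓrs
    obtain ⟨hℓr, hℓs⟩ := hℓrs
    by_cases hℓt : ℓ = t
    · simp only [hT]; simp [hℓt]
    · simp only [hT]
      refine sum_eq_zero_of_swap_neg ℓ t _ fun j => ?_
      have hPP : (∏ m ∈ R, z (j (Equiv.swap ℓ t m)) m) = ∏ m ∈ R, z (j m) m :=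
        Finset.prod_congr rfl fun m hm => by
          have h1 : m ≠ ℓ := by rintro rfl; exact hℓR hm
          have h2 : m ≠ t := by rintro rfl; exact ht hm
          rw [Equiv.swap_apply_of_ne_of_ne h1 h2]
      simp only [hA, hP, htrans]
      rw [Equiv.swap_apply_left, Equiv.swap_apply_right,
        Equiv.swap_apply_of_ne_of_ne (Ne.symm hℓr) hrt,
        Equiv.swap_apply_of_ne_of_ne (Ne.symm hℓs) hst, hPP]
      ring
  have hTs : T s = T r := by
    simp only [hT]
    rw [sum_swap_reindex r s (fun j => A j * P j * (z (j t) t - z (j s) t))]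
    refine Finset.sum_congr rfl fun j _ => ?_
    have hPP : (∏ m ∈ R, z (j (Equiv.swap r s m)) m) = ∏ m ∈ R, z (j m) m :=
      Finset.prod_congr rfl fun m hm => by
        have h1 : m ≠ r := by rintro rfl; exact hr hm
        have h2 : m ≠ s := by rintro rfl; exact hs hm
        rw [Equiv.swap_apply_of_ne_of_ne h1 h2]
    simp only [hA, hP, htrans]
    rw [Equiv.swap_apply_left, Equiv.swap_apply_right,
      Equiv.swap_apply_of_ne_of_ne hrt.symm hst.symm, hPP]
    ring
  -- T q for q ∈ R
  have hTq : ∀ q ∈ R, T q = -(1/2) * U q := by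
    intro q hq
    have hqt : q ≠ t := by rintro rfl; exact ht hq
    have hqr : q ≠ r := by rintro rfl; exact hr hq
    have hqs : q ≠ s := by rintro rfl; exact hs hq
    have hii : T q = ∑ j : Fin n ↪ Fin N,
        A j * (z (j t) q * ∏ ℓ ∈ R.erase q, z (j ℓ) ℓ) * (z (j q) t - z (j t) t) := by
      simp only [hT]
      rw [sum_swap_reindex t q (fun j => A j * P j * (z (j t) t - z (j q) t))]
      refine Finset.sum_congr rfl fun j _ => ?_
      have hPP : (∏ m ∈ R, z (j (Equiv.swap t q m)) m)
          = z (j (Equiv.swap t q q)) q * ∏ m ∈ R.erase q, z (j (Equiv.swap t q m)) m :=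
        (Finset.mul_prod_erase R _ hq).symm
      have hPP2 : (∏ m ∈ R.erase q, z (j (Equiv.swap t q m)) m)
          = ∏ m ∈ R.erase q, z (j m) m :=
        Finset.prod_congr rfl fun m hm => by
          have h1 : m ≠ t := by rintro rfl; exact ht (Finset.mem_erase.mp hm).2
          rw [Equiv.swap_apply_of_ne_of_ne h1 (Finset.mem_erase.mp hm).1]
      simp only [hA, hP, htrans]
      rw [hPP, hPP2, Equiv.swap_apply_left, Equiv.swap_apply_right,
        Equiv.swap_apply_of_ne_of_ne hrt hqr.symm,
        Equiv.swap_apply_of_ne_of_ne hst hqs.symm]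
    have h2T : 2 * T q = - U q := by
      have hTdef : T q = ∑ j : Fin n ↪ Fin N, A j * P j * (z (j t) t - z (j q) t) := by
        simp only [hT]
      rw [two_mul]
      nth_rewrite 1 [hTdef]
      rw [hii, hU, ← Finset.sum_add_distrib, ← Finset.sum_neg_distrib]
      refine Finset.sum_congr rfl fun j _ => ?_
      have hPs : P j = z (j q) q * ∏ ℓ ∈ R.erase q, z (j ℓ) ℓ := by
        rw [hP]; exact (Finset.mul_prod_erase R _ hq).symm
      rw [hPs]
      simp only [hA]
      ring
    linear_combination h2T / 2
  have hTr : T r = ∑ j : Fin n ↪ Fin N,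
      (z (j r) r - z (j s) r) * (z (j r) s - z (j s) s) *
        (z (j t) t - z (j r) t) * ∏ ℓ ∈ R, z (j ℓ) ℓ := by
    simp only [hT, hA, hP]
    exact Finset.sum_congr rfl fun j _ => by ring
  -- assemble
  rw [main1]
  have hsplit : ∑ ℓ : Fin n, T ℓ = (T r + T s) + ∑ q ∈ R, T q := by
    rw [← Finset.sum_sdiff (Finset.subset_univ R)]
    congr 1
    rw [← Finset.sum_subset (s₁ := ({r, s} : Finset (Fin n))) ?_ hTzero]
    · rw [Finset.sum_insert (by simp [hrs]), Finset.sum_singleton]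
    · intro x hx
      simp only [Finset.mem_insert, Finset.mem_singleton] at hx
      rcases hx with h | h <;> subst h <;> simp [hr, hs]
  rw [hsplit, hTs, Finset.sum_congr rfl hTq, ← Finset.mul_sum, hTr]
  simp only [hU]
  field_simp
  ring
end

section
/- For every integer n ≥ 2, ∑_{k=2}^n C(n−2,k−2) / (k·C(n,k)) = 1/2, where C(a,b) denotes the binomial coefficient. -/
lemma key_nat (a m : ℕ) :
    (a + 2) * (a + 1) * (m + a + 2).choose (a + 2) =
      (m + a + 2) * (m + a + 1) * (m + a).choose a := by
  have h1 := Nat.add_one_mul_choose_eq (m + a + 1) (a + 1)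
  have h2 := Nat.add_one_mul_choose_eq (m + a) a
  nlinarith [h1, h2]

lemma sum_aux (n : ℕ) (hn : 2 ≤ n) :
    ∑ k ∈ Finset.Icc 2 n, ((k : ℚ) - 1) = n * (n - 1) / 2 := by
  induction n, hn using Nat.le_induction with
  | base => norm_num
  | succ n hn ih =>
    rw [Finset.sum_Icc_succ_top (by omega), ih]
    push_cast
    ring

/-- The combinatorial identity (21) of the paper. -/
theorem stmt_7 (n : ℕ) (hn : 2 ≤ n) :
    ∑ k ∈ Finset.Icc 2 n,
      ((n - 2).choose (k - 2) : ℚ) / ((k : ℚ) * (n.choose k : ℚ)) = 1 / 2 := by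
  have hcong : ∀ k ∈ Finset.Icc 2 n,
      ((n - 2).choose (k - 2) : ℚ) / ((k : ℚ) * (n.choose k : ℚ)) =
        ((k : ℚ) - 1) / ((n : ℚ) * ((n : ℚ) - 1)) := by
    intro k hk
    obtain ⟨hk2, hkn⟩ := Finset.mem_Icc.mp hk
    obtain ⟨a, rfl⟩ : ∃ a, k = a + 2 := ⟨k - 2, by omega⟩
    obtain ⟨m, rfl⟩ : ∃ m, n = m + a + 2 := ⟨n - a - 2, by omega⟩
    have key := key_nat a m
    have hpos : 0 < (m + a + 2).choose (a + 2) := Nat.choose_pos (by omega)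
    have hchoose : ((m + a + 2).choose (a + 2) : ℚ) ≠ 0 := by positivity
    have h1 : ((a : ℚ) + 2) ≠ 0 := by positivity
    have h2 : ((m : ℚ) + a + 2) ≠ 0 := by positivity
    have h3 : ((m : ℚ) + a + 1) ≠ 0 := by positivity
    have hs1 : (m + a + 2 - 2 : ℕ) = m + a := by omega
    have hs2 : (a + 2 - 2 : ℕ) = a := by omega
    rw [hs1, hs2]
    push_cast
    have hsub : ((m : ℚ) + a + 2) - 1 = (m : ℚ) + a + 1 := by ring
    rw [hsub]
    field_simp
    have keyQ : ((a : ℚ) + 2) * ((a : ℚ) + 1) * ((m + a + 2).choose (a + 2) : ℚ) =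
        ((m : ℚ) + a + 2) * ((m : ℚ) + a + 1) * ((m + a).choose a : ℚ) := by
      exact_mod_cast congrArg (Nat.cast : ℕ → ℚ) key
    nlinarith [keyQ]
  rw [Finset.sum_congr rfl hcong]
  rw [← Finset.sum_div, sum_aux n hn]
  have h1 : (n : ℚ) ≠ 0 := by positivity
  have h2 : (n : ℚ) - 1 ≠ 0 := by
    have : (2 : ℚ) ≤ n := by exact_mod_cast hn
    linarith
  field_simp
end

section
/- For integers n ≥ 3 and 1 ≤ ℓ ≤ n−2: ∑_{k=ℓ+2}^n (n−ℓ−2)! / (k·ℓ·C(n,k)·C(k−2,ℓ)·(n−k)!·(k−ℓ−2)!) = (n+ℓ)(n−ℓ−1) / (2·ℓ·(ℓ+1)·(ℓ+2)·C(n,ℓ+2)), where C(a,b) denotes the binomial coefficient. -/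
/-!
Since `C(n,k) (n-k)! = n!/k!` and `C(k-2,ℓ) (k-ℓ-2)! = (k-2)!/ℓ!`, the `k`-th summand is
`(n-ℓ-2)! ℓ! (k-1) / (ℓ n!)`, so the sum is an arithmetic series, and
`n! = C(n,ℓ+2) (ℓ+2)! (n-ℓ-2)!` turns its value into the stated closed form.
-/

open Nat Finset

section

variable {K : Type*} [Field K] [CharZero K]

lemma factorial_div_mul_choose_mul_choose_eq {n k ℓ : ℕ} (hℓk : ℓ + 2 ≤ k) (hkn : k ≤ n) :
    ((n - ℓ - 2)! : K) / (k * n.choose k * (k - 2).choose ℓ * (n - k)! * (k - ℓ - 2)!) =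
      (n - ℓ - 2)! * ℓ ! / n ! * ((k : K) - 1) := by
  obtain ⟨m, rfl⟩ : ∃ m, k = m + 2 := ⟨k - 2, by omega⟩
  rw [cast_choose K hkn, cast_choose K (show ℓ ≤ m + 2 - 2 by omega),
    show m + 2 - 2 = m by omega, show m + 2 - ℓ - 2 = m - ℓ by omega,
    factorial_succ, factorial_succ]
  have hm2 : (m : K) + 2 ≠ 0 := by exact_mod_cast (m + 1).succ_ne_zero
  have hf (j : ℕ) : (j ! : K) ≠ 0 := by exact_mod_cast j.factorial_ne_zero
  push_cast
  field_simp [hf]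
  ring

lemma sum_Icc_cast_sub_one {ℓ n : ℕ} (h : ℓ + 1 ≤ n) :
    ∑ k ∈ Icc (ℓ + 2) n, ((k : K) - 1) = ((n : K) + ℓ) * ((n : K) - ℓ - 1) / 2 := by
  induction n, h using Nat.le_induction with
  | base => rw [Icc_eq_empty (by omega), sum_empty]; push_cast; ring
  | succ N hN ih =>
    rw [sum_Icc_succ_top (by omega), ih]
    push_cast
    ring

lemma sum_factorial_div_mul_choose_mul_choose {n ℓ : ℕ} (h : ℓ + 2 ≤ n) :
    ∑ k ∈ Icc (ℓ + 2) n,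
      ((n - ℓ - 2)! : K) / (k * n.choose k * (k - 2).choose ℓ * (n - k)! * (k - ℓ - 2)!) =
        ((n : K) + ℓ) * ((n : K) - ℓ - 1) / (2 * ((ℓ : K) + 1) * (ℓ + 2) * n.choose (ℓ + 2)) := by
  rw [sum_congr rfl fun k hk => factorial_div_mul_choose_mul_choose_eq (mem_Icc.1 hk).1
    (mem_Icc.1 hk).2, ← mul_sum, sum_Icc_cast_sub_one (by omega), cast_choose K h,
    show n - (ℓ + 2) = n - ℓ - 2 by omega, factorial_succ, factorial_succ]
  have hℓ2 : (ℓ : K) + 2 ≠ 0 := by exact_mod_cast (ℓ + 1).succ_ne_zero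
  push_cast
  field_simp
  ring

end

theorem stmt_8_general (n ℓ : ℕ) (hn : 3 ≤ n) (hl2 : ℓ ≤ n - 2) :
    ∑ k ∈ Finset.Icc (ℓ + 2) n,
      ((n - ℓ - 2).factorial : ℚ) /
        ((k : ℚ) * (ℓ : ℚ) * (n.choose k : ℚ) * ((k - 2).choose ℓ : ℚ) *
          ((n - k).factorial : ℚ) * ((k - ℓ - 2).factorial : ℚ))
    = ((n : ℚ) + ℓ) * ((n : ℚ) - ℓ - 1) /
        (2 * (ℓ : ℚ) * ((ℓ : ℚ) + 1) * ((ℓ : ℚ) + 2) * (n.choose (ℓ + 2) : ℚ)) := by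
  calc _ = (ℓ : ℚ)⁻¹ * ∑ k ∈ Icc (ℓ + 2) n,
          ((n - ℓ - 2)! : ℚ) / (k * n.choose k * (k - 2).choose ℓ * (n - k)! * (k - ℓ - 2)!) := by
        rw [mul_sum]
        exact sum_congr rfl fun k _ => by ring
    _ = _ := by
        rw [sum_factorial_div_mul_choose_mul_choose (by omega), inv_mul_eq_div, div_div]
        congr 1
        ring

/-- The combinatorial identity used in the proof of Theorem 9. -/
theorem stmt_8 (n ℓ : ℕ) (hn : 3 ≤ n) (hl1 : 1 ≤ ℓ) (hl2 : ℓ ≤ n - 2) :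
    ∑ k ∈ Finset.Icc (ℓ + 2) n,
      ((n - ℓ - 2).factorial : ℚ) /
        ((k : ℚ) * (ℓ : ℚ) * (n.choose k : ℚ) * ((k - 2).choose ℓ : ℚ) *
          ((n - k).factorial : ℚ) * ((k - ℓ - 2).factorial : ℚ))
    = ((n : ℚ) + ℓ) * ((n : ℚ) - ℓ - 1) /
        (2 * (ℓ : ℚ) * ((ℓ : ℚ) + 1) * ((ℓ : ℚ) + 2) * (n.choose (ℓ + 2) : ℚ)) :=
  stmt_8_general n ℓ hn hl2
end

section
/- Let 1 ≤ n ≤ N and let Z = (z_{j,r}) be an N×n complex matrix. Then |Per(Z)| ≤ (N!/(N−n)!) · ∏_{r=1}^n ((1/N)·∑_{j=1}^N |z_{j,r}|²)^{1/2}, where Per(Z) = ∑_{j∈Inj([n],[N])} ∏_{r=1}^n z_{j(r),r}. -/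
set_option maxHeartbeats 1000000

open Finset Function

namespace CLL

variable {N n : ℕ}


variable {N n : ℕ}

noncomputable def P (c : Fin n → Fin N → ℝ) : ℝ :=
  ∑ e : Fin n ↪ Fin N, ∏ r, c r (e r)

lemma P_nonneg {c : Fin n → Fin N → ℝ} (hc : ∀ r i, 0 ≤ c r i) : 0 ≤ P c :=
  Finset.sum_nonneg fun e _ => Finset.prod_nonneg fun r _ => hc r (e r)

lemma P_continuous : Continuous (P (N := N) (n := n)) := by
  unfold P
  exact continuous_finset_sum _ fun e _ => continuous_finset_prod _ fun r _ =>
    (continuous_apply (e r)).comp (continuous_apply r)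

lemma prod_update_eval (c : Fin n → Fin N → ℝ) (r : Fin n) (w : Fin N → ℝ)
    (e : Fin n ↪ Fin N) :
    ∏ r', (Function.update c r w) r' (e r') = w (e r) * ∏ r' ∈ univ.erase r, c r' (e r') := by
  rw [← Finset.prod_erase_mul univ _ (mem_univ r), Function.update_self, mul_comm]
  congr 1
  exact Finset.prod_congr rfl fun r' hr' => by
    rw [Function.update_of_ne (Finset.ne_of_mem_erase hr')]

lemma P_update (c : Fin n → Fin N → ℝ) (r : Fin n) (w : Fin N → ℝ) :
    P (Function.update c r w) = ∑ i, w i * P (Function.update c r (Pi.single i 1)) := by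
  unfold P
  have : ∀ i, (w i * ∑ e : Fin n ↪ Fin N, ∏ r', (Function.update c r (Pi.single i 1)) r' (e r'))
      = ∑ e : Fin n ↪ Fin N, w i * ((if e r = i then (1:ℝ) else 0) *
          ∏ r' ∈ univ.erase r, c r' (e r')) := by
    intro i
    rw [Finset.mul_sum]
    refine Finset.sum_congr rfl fun e _ => ?_
    rw [prod_update_eval, Pi.single_apply]
  simp only [this]
  rw [Finset.sum_comm]
  refine Finset.sum_congr rfl fun e _ => ?_
  rw [prod_update_eval]
  rw [Finset.sum_eq_single (e r)]
  · simp
  · intro i _ hne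
    simp [Ne.symm hne]
  · simp

lemma P_smul (d : Fin n → ℝ) (c : Fin n → Fin N → ℝ) :
    P (fun r i => d r * c r i) = (∏ r, d r) * P c := by
  unfold P
  rw [Finset.mul_sum]
  exact Finset.sum_congr rfl fun e _ => by rw [← Finset.prod_mul_distrib]



variable {N n : ℕ}

lemma P_comp_equiv (σ : Equiv.Perm (Fin n)) (c : Fin n → Fin N → ℝ) :
    P (c ∘ σ) = P c := by
  unfold P
  rw [← Equiv.sum_comp (Equiv.embeddingCongr σ (Equiv.refl (Fin N)))
      (fun e : Fin n ↪ Fin N => ∏ r, c r (e r))]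
  refine Finset.sum_congr rfl fun e _ => ?_
  rw [← Equiv.prod_comp σ (fun r => c r (Equiv.embeddingCongr σ (Equiv.refl (Fin N)) e r))]
  refine Finset.prod_congr rfl fun r _ => ?_
  simp [Equiv.embeddingCongr_apply]

def S : Set (Fin n → Fin N → ℝ) :=
  {c | ∀ r, (∀ i, 0 ≤ c r i) ∧ ∑ i, (c r i) ^ 2 = 1}

lemma isClosed_S : IsClosed (S (N := N) (n := n)) := by
  have : S (N := N) (n := n) =
      (⋂ r, ⋂ i, {c : Fin n → Fin N → ℝ | 0 ≤ c r i}) ∩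
      (⋂ r, {c : Fin n → Fin N → ℝ | ∑ i, (c r i) ^ 2 = 1}) := by
    ext c
    simp only [S, Set.mem_setOf_eq, Set.mem_inter_iff, Set.mem_iInter]
    constructor
    · intro h; exact ⟨fun r i => (h r).1 i, fun r => (h r).2⟩
    · intro h r; exact ⟨fun i => h.1 r i, h.2 r⟩
  rw [this]
  refine IsClosed.inter (isClosed_iInter fun r => isClosed_iInter fun i => ?_)
    (isClosed_iInter fun r => ?_)
  · exact isClosed_le continuous_const ((continuous_apply i).comp (continuous_apply r))
  · exact isClosed_eq (by
      exact continuous_finset_sum _ fun i _ =>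
        (((continuous_apply i).comp (continuous_apply r)).pow 2)) continuous_const

lemma isCompact_S : IsCompact (S (N := N) (n := n)) := by
  refine Metric.isCompact_of_isClosed_isBounded isClosed_S ?_
  rw [Metric.isBounded_iff_subset_closedBall 0]
  refine ⟨1, fun c hc => ?_⟩
  rw [Metric.mem_closedBall, dist_zero_right]
  rw [pi_norm_le_iff_of_nonneg zero_le_one]
  intro r
  rw [pi_norm_le_iff_of_nonneg zero_le_one]
  intro i
  rw [Real.norm_eq_abs, abs_le_one_iff_mul_self_le_one]
  have h1 : (c r i) ^ 2 ≤ 1 := by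
    have := (hc r).2
    calc (c r i) ^ 2 ≤ ∑ i', (c r i') ^ 2 :=
          Finset.single_le_sum (f := fun i' => (c r i') ^ 2) (fun i' _ => sq_nonneg _) (mem_univ i)
      _ = 1 := this
  nlinarith [h1]



variable {N n : ℕ}

lemma update_mem_S {x : Fin n → Fin N → ℝ} (hx : x ∈ S) (r : Fin n) {w : Fin N → ℝ}
    (hw : (∀ i, 0 ≤ w i) ∧ ∑ i, (w i) ^ 2 = 1) : Function.update x r w ∈ S := by
  intro r'
  by_cases h : r' = r
  · subst h; rw [Function.update_self]; exact hw
  · rw [Function.update_of_ne h]; exact hx r'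

lemma first_order {x : Fin n → Fin N → ℝ} (hx : x ∈ S)
    (hmax : ∀ c ∈ S (N := N) (n := n), P c ≤ P x) (hM : 0 < P x) (r : Fin n) :
    ∀ i, P (Function.update x r (Pi.single i 1)) = P x * x r i := by
  set M := P x with hMdef
  set G : Fin N → ℝ := fun i => P (Function.update x r (Pi.single i 1)) with hGdef
  have hGnn : ∀ i, 0 ≤ G i := by
    intro i
    refine P_nonneg fun r' i' => ?_
    by_cases h : r' = r
    · subst h; rw [Function.update_self, Pi.single_apply]; split <;> norm_num
    · rw [Function.update_of_ne h]; exact (hx r').1 i'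
  have hPx : M = ∑ i, x r i * G i := by
    conv_lhs => rw [hMdef, ← Function.update_eq_self r x, P_update]
  have hxr2 : ∑ i, (x r i) ^ 2 = 1 := (hx r).2
  have hGM : ∑ i, (G i) ^ 2 ≤ M ^ 2 := by
    by_cases hG0 : ∑ i, (G i) ^ 2 = 0
    · rw [hG0]; positivity
    · set L := Real.sqrt (∑ i, (G i) ^ 2) with hLdef
      have hL2 : L ^ 2 = ∑ i, (G i) ^ 2 :=
        Real.sq_sqrt (Finset.sum_nonneg fun i _ => sq_nonneg _)
      have hLpos : 0 < L := Real.sqrt_pos.2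
        (lt_of_le_of_ne (Finset.sum_nonneg fun i _ => sq_nonneg _) (Ne.symm hG0))
      have hwS : (∀ i, 0 ≤ G i / L) ∧ ∑ i, (G i / L) ^ 2 = 1 := by
        constructor
        · intro i; exact div_nonneg (hGnn i) hLpos.le
        · have : ∀ i, (G i / L) ^ 2 = (G i) ^ 2 * (L ^ 2)⁻¹ := by
            intro i; field_simp
          simp only [this]
          rw [← Finset.sum_mul, ← hL2]
          field_simp
      have hfeas := hmax _ (update_mem_S hx r hwS)
      have hval : P (Function.update x r (fun i => G i / L)) = L := by
        rw [P_update]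
        have : ∀ i, G i / L * G i = (G i) ^ 2 / L := by intro i; ring
        show ∑ i, G i / L * G i = L
        simp only [this]
        rw [← Finset.sum_div, ← hL2, sq, mul_div_assoc, div_self hLpos.ne', mul_one]
      rw [hval] at hfeas
      rw [← hL2]
      exact pow_le_pow_left₀ hLpos.le hfeas 2
  have hsum0 : ∑ i, (G i - M * x r i) ^ 2 ≤ 0 := by
    have hexp : ∀ i, (G i - M * x r i) ^ 2
        = (G i) ^ 2 - 2 * M * (x r i * G i) + M ^ 2 * (x r i) ^ 2 := by
      intro i; ring
    calc ∑ i, (G i - M * x r i) ^ 2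
        = ∑ i, (G i) ^ 2 - 2 * M * (∑ i, x r i * G i) + M ^ 2 * (∑ i, (x r i) ^ 2) := by
          simp only [hexp]
          rw [Finset.sum_add_distrib, Finset.sum_sub_distrib, ← Finset.mul_sum, ← Finset.mul_sum]
      _ = ∑ i, (G i) ^ 2 - M ^ 2 := by rw [← hPx, hxr2]; ring
      _ ≤ 0 := by linarith
  intro i
  have : ∀ j ∈ univ, (0:ℝ) ≤ (G j - M * x r j) ^ 2 := fun j _ => sq_nonneg _
  have hall := (Finset.sum_eq_zero_iff_of_nonneg this).1
    (le_antisymm hsum0 (Finset.sum_nonneg this))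
  have hi := hall i (mem_univ i)
  have : G i - M * x r i = 0 := by
    exact pow_eq_zero_iff (two_ne_zero) |>.1 hi
  linarith [this]



variable {N n : ℕ}

noncomputable def Ψ (c : Fin n → Fin N → ℝ) : ℝ := ∑ i, (∑ r, c r i) ^ 2

lemma update_eval (x : Fin n → Fin N → ℝ) (r : Fin n) (u : Fin N → ℝ) (i : Fin N) (r' : Fin n) :
    (Function.update x r u) r' i = Function.update (fun q => x q i) r (u i) r' := by
  by_cases h : r' = r
  · subst h; rw [Function.update_self, Function.update_self]
  · rw [Function.update_of_ne h, Function.update_of_ne h]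

lemma W_symm {x : Fin n → Fin N → ℝ} {r s : Fin n} (hrs : r ≠ s) (i k : Fin N) :
    P (Function.update (Function.update x r (Pi.single i 1)) s (Pi.single k 1))
      = P (Function.update (Function.update x r (Pi.single k 1)) s (Pi.single i 1)) := by
  have hkey : (Function.update (Function.update x r (Pi.single i 1)) s (Pi.single k 1)) ∘
      (Equiv.swap r s) =
      Function.update (Function.update x r (Pi.single k 1)) s (Pi.single i 1) := by
    funext r'
    rcases eq_or_ne r' r with h1 | h1
    · subst h1
      rw [comp_apply, Equiv.swap_apply_left]
      rw [Function.update_self, Function.update_of_ne hrs, Function.update_self]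
    · rcases eq_or_ne r' s with h2 | h2
      · subst h2
        rw [comp_apply, Equiv.swap_apply_right]
        rw [Function.update_of_ne hrs, Function.update_self, Function.update_self]
      · rw [comp_apply, Equiv.swap_apply_of_ne_of_ne h1 h2]
        rw [Function.update_of_ne h2, Function.update_of_ne h1,
          Function.update_of_ne h2, Function.update_of_ne h1]
  rw [← hkey, P_comp_equiv]

lemma merge {x : Fin n → Fin N → ℝ} (hx : x ∈ S)
    (hmax : ∀ c ∈ S (N := N) (n := n), P c ≤ P x) (hM : 0 < P x)
    {r s : Fin n} (hrs : r ≠ s) (hab : x r ≠ x s) :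
    ∃ y ∈ S (N := N) (n := n), P y = P x ∧ Ψ x < Ψ y := by
  classical
  set M := P x with hMdef
  set a : Fin N → ℝ := x r with hadef
  set b : Fin N → ℝ := x s with hbdef
  have ha := hx r
  have hb := hx s
  set t : ℝ := ∑ i, a i * b i with htdef
  have ht0 : 0 ≤ t := Finset.sum_nonneg fun i _ => mul_nonneg (ha.1 i) (hb.1 i)
  have hdiffsum : ∑ i, (a i - b i) ^ 2 = 2 - 2 * t := by
    have : ∀ i, (a i - b i) ^ 2 = (a i)^2 - 2 * (a i * b i) + (b i)^2 := fun i => by ring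
    simp only [this]
    rw [Finset.sum_add_distrib, Finset.sum_sub_distrib, ← Finset.mul_sum, ha.2, hb.2, ← htdef]
    ring
  have ht1 : t < 1 := by
    have hpos : 0 < ∑ i, (a i - b i) ^ 2 := by
      rcases Function.ne_iff.1 hab with ⟨i0, hi0⟩
      refine Finset.sum_pos' (fun i _ => sq_nonneg _) ⟨i0, mem_univ i0, ?_⟩
      have h2 : (a i0 - b i0) ^ 2 ≠ 0 := pow_ne_zero _ (sub_ne_zero.2 hi0)
      exact lt_of_le_of_ne (sq_nonneg _) (Ne.symm h2)
    rw [hdiffsum] at hpos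
    linarith
  set γ : ℝ := Real.sqrt (2 + 2 * t) with hγdef
  have hγ2 : γ ^ 2 = 2 + 2 * t := Real.sq_sqrt (by linarith)
  have hγpos : 0 < γ := Real.sqrt_pos.2 (by linarith)
  have hγlt2 : γ < 2 := by
    have h4 : Real.sqrt 4 = 2 := by
      rw [show (4:ℝ) = 2^2 by norm_num, Real.sqrt_sq (by norm_num : (0:ℝ) ≤ 2)]
    have := Real.sqrt_lt_sqrt (by linarith : (0:ℝ) ≤ 2 + 2*t) (by linarith : 2 + 2*t < 4)
    rw [h4] at this
    exact this
  set u : Fin N → ℝ := fun i => (a i + b i) / γ with hudef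
  have habsq : ∑ i, (a i + b i) ^ 2 = 2 + 2 * t := by
    have he : ∀ i, (a i + b i)^2 = (a i)^2 + 2*(a i * b i) + (b i)^2 := fun i => by ring
    simp only [he]
    rw [Finset.sum_add_distrib, Finset.sum_add_distrib, ← Finset.mul_sum, ha.2, hb.2, ← htdef]
    ring
  have huS : (∀ i, 0 ≤ u i) ∧ ∑ i, (u i) ^ 2 = 1 := by
    constructor
    · intro i; exact div_nonneg (by linarith [ha.1 i, hb.1 i]) hγpos.le
    · have he : ∀ i, (u i)^2 = (a i + b i)^2 / γ^2 := fun i => by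
        rw [hudef]; rw [div_pow]
      simp only [he]
      rw [← Finset.sum_div, habsq, hγ2, div_self (by positivity)]
  set y := Function.update (Function.update x r u) s u with hydef
  have hyS : y ∈ S := update_mem_S (update_mem_S hx r huS) s huS
  have hFO_r := first_order hx hmax hM r
  have hFO_s := first_order hx hmax hM s
  set W : Fin N → Fin N → ℝ := fun i k =>
    P (Function.update (Function.update x r (Pi.single i 1)) s (Pi.single k 1)) with hWdef
  have hWsymm : ∀ i k, W i k = W k i := fun i k => W_symm hrs i k
  have R1 : ∀ i, ∑ k, b k * W i k = M * a i := by
    intro i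
    have h1 : Function.update (Function.update x r (Pi.single i 1)) s b
        = Function.update x r (Pi.single i 1) := by
      have hb' : b = (Function.update x r (Pi.single i 1)) s := by
        rw [Function.update_of_ne (Ne.symm hrs)]
      rw [hb', Function.update_eq_self]
    have h2 := P_update (Function.update x r (Pi.single i 1)) s b
    rw [h1] at h2
    rw [← hFO_r i, h2]
  have R2 : ∀ k, ∑ i, a i * W i k = M * b k := by
    intro k
    have h1 : Function.update (Function.update x s (Pi.single k 1)) r a
        = Function.update x s (Pi.single k 1) := by
      have ha' : a = (Function.update x s (Pi.single k 1)) r := by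
        rw [Function.update_of_ne hrs]
      rw [ha', Function.update_eq_self]
    have h2 := P_update (Function.update x s (Pi.single k 1)) r a
    rw [h1, hFO_s k] at h2
    rw [h2]
    refine Finset.sum_congr rfl fun i _ => ?_
    congr 1
    show P (Function.update (Function.update x r (Pi.single i 1)) s (Pi.single k 1)) = _
    rw [Function.update_comm hrs]
  have R1' : ∀ k, ∑ i, b i * W i k = M * a k := by
    intro k
    calc ∑ i, b i * W i k = ∑ i, b i * W k i :=
          Finset.sum_congr rfl fun i _ => by rw [hWsymm i k]
      _ = M * a k := R1 k
  have hPy : P y = M := by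
    have e1 : P y = ∑ k, u k * P (Function.update (Function.update x r u) s (Pi.single k 1)) :=
      P_update _ s u
    have e2 : ∀ k, P (Function.update (Function.update x r u) s (Pi.single k 1))
        = ∑ i, u i * W i k := by
      intro k
      rw [Function.update_comm hrs]
      rw [P_update]
      refine Finset.sum_congr rfl fun i _ => ?_
      congr 1
      show _ = P (Function.update (Function.update x r (Pi.single i 1)) s (Pi.single k 1))
      rw [Function.update_comm (Ne.symm hrs)]
    have hcontr2 : ∀ k, ∑ i, u i * W i k = γ⁻¹ * (M * (a k + b k)) := by
      intro k
      have he : ∀ i, u i * W i k = γ⁻¹ * (a i * W i k + b i * W i k) := fun i => by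
        rw [hudef]
        field_simp
      simp only [he]
      rw [← Finset.mul_sum, Finset.sum_add_distrib, R2 k, R1' k]
      ring
    rw [e1]
    simp only [e2, hcontr2]
    have he : ∀ k, u k * (γ⁻¹ * (M * (a k + b k))) = γ⁻¹ * γ⁻¹ * M * ((a k + b k)^2) := by
      intro k
      rw [hudef]
      field_simp
    simp only [he]
    rw [← Finset.mul_sum, habsq, ← hγ2, sq]
    field_simp
  have hrow : ∀ i, ∑ r', y r' i = (∑ r', x r' i) + (2 * u i - (a i + b i)) := by
    intro i
    have hy_eval : ∀ r', y r' i
        = Function.update (Function.update (fun q => x q i) r (u i)) s (u i) r' := by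
      intro r'
      rw [hydef, update_eval]
      congr 1
      funext q
      exact update_eval x r u i q
    rw [Finset.sum_congr rfl fun r' _ => hy_eval r']
    have hrs' : r ∈ univ \ {s} := by
      simp [Finset.mem_sdiff, hrs]
    rw [Finset.sum_update_of_mem (mem_univ s), Finset.sum_update_of_mem hrs']
    have hxsum : ∑ r', x r' i = x s i + (x r i + ∑ r' ∈ (univ \ {s}) \ {r}, x r' i) := by
      rw [Finset.sum_eq_add_sum_sdiff_singleton_of_mem (mem_univ s) (fun q => x q i)]
      congr 1
      rw [Finset.sum_eq_add_sum_sdiff_singleton_of_mem hrs' (fun q => x q i)]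
    rw [hxsum]
    have hai : x r i = a i := rfl
    have hbi : x s i = b i := rfl
    rw [hai, hbi]
    ring
  have hdrep : ∀ i, 2 * u i - (a i + b i) = (a i + b i) * (2 - γ) / γ := by
    intro i
    rw [hudef]
    field_simp
  have hd : ∀ i, 0 ≤ 2 * u i - (a i + b i) := by
    intro i
    rw [hdrep i]
    exact div_nonneg (mul_nonneg (by linarith [ha.1 i, hb.1 i]) (by linarith)) hγpos.le
  have hex : ∃ i0, 0 < a i0 := by
    by_contra hcon
    push_neg at hcon
    have hz : ∀ i, a i = 0 := fun i => le_antisymm (hcon i) (ha.1 i)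
    have hzz : ∑ i, (a i)^2 = 0 := by simp [hz]
    rw [ha.2] at hzz
    norm_num at hzz
  obtain ⟨i0, hi0⟩ := hex
  have hd0 : 0 < 2 * u i0 - (a i0 + b i0) := by
    rw [hdrep i0]
    exact div_pos (mul_pos (by linarith [hb.1 i0]) (by linarith)) hγpos
  have hΨ : Ψ x < Ψ y := by
    unfold Ψ
    refine Finset.sum_lt_sum (fun i _ => ?_) ⟨i0, mem_univ i0, ?_⟩
    · rw [hrow i]
      have hR : 0 ≤ ∑ r', x r' i := Finset.sum_nonneg fun r' _ => (hx r').1 i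
      nlinarith [hd i]
    · rw [hrow i0]
      have hR : 0 ≤ ∑ r', x r' i0 := Finset.sum_nonneg fun r' _ => (hx r').1 i0
      nlinarith [hd0]
  exact ⟨y, hyS, hPy, hΨ⟩



variable {N n : ℕ}

def S2 : Set (Fin N → ℝ) := {v | (∀ i, 0 ≤ v i) ∧ ∑ i, (v i) ^ 2 = 1}

noncomputable def Q (n : ℕ) (v : Fin N → ℝ) : ℝ := P (n := n) (fun _ => v)

lemma Ψ_continuous : Continuous (Ψ (N := N) (n := n)) := by
  unfold Ψ
  exact continuous_finset_sum _ fun i _ =>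
    (continuous_finset_sum _ fun r _ => (continuous_apply i).comp (continuous_apply r)).pow 2

lemma sq_inv_sqrt (hN : 0 < N) : ((Real.sqrt N)⁻¹ : ℝ) ^ 2 = (N : ℝ)⁻¹ := by
  rw [inv_pow, Real.sq_sqrt (by positivity : (0:ℝ) ≤ (N:ℝ))]

lemma const_mem_S (hN : 0 < N) :
    (fun (_ : Fin n) (_ : Fin N) => (Real.sqrt N)⁻¹) ∈ S (N := N) (n := n) := by
  intro r
  constructor
  · intro i; positivity
  · rw [Finset.sum_const, card_univ, Fintype.card_fin, nsmul_eq_mul, sq_inv_sqrt hN]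
    rw [mul_inv_cancel₀ (by positivity : (N:ℝ) ≠ 0)]

lemma P_const_pos (hn : 0 < n) (hnN : n ≤ N) :
    0 < P (fun (_ : Fin n) (_ : Fin N) => (Real.sqrt N)⁻¹) := by
  have hN : 0 < N := lt_of_lt_of_le hn hnN
  unfold P
  refine Finset.sum_pos (fun e _ => Finset.prod_pos fun r _ => by positivity) ?_
  rw [Finset.univ_nonempty_iff]
  exact ⟨(Fin.castLEEmb hnN)⟩

lemma exists_diag_dominates (hn : 0 < n) (hnN : n ≤ N) :
    ∃ v ∈ S2 (N := N), ∀ c ∈ S (N := N) (n := n), P c ≤ Q n v := by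
  classical
  have hN : 0 < N := lt_of_lt_of_le hn hnN
  have hSne : (S (N := N) (n := n)).Nonempty := ⟨_, const_mem_S hN⟩
  obtain ⟨x, hxS, hxmax⟩ := isCompact_S.exists_isMaxOn hSne P_continuous.continuousOn
  set M := P x with hMdef
  have hmax : ∀ c ∈ S (N := N) (n := n), P c ≤ M := fun c hc => hxmax hc
  have hMpos : 0 < M := lt_of_lt_of_le (P_const_pos hn hnN) (hmax _ (const_mem_S hN))
  set Max : Set (Fin n → Fin N → ℝ) := S ∩ {c | P c = M} with hMaxdef
  have hMaxcomp : IsCompact Max :=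
    isCompact_S.inter_right (isClosed_eq P_continuous continuous_const)
  have hMaxne : Max.Nonempty := ⟨x, hxS, rfl⟩
  obtain ⟨w, hwMax, hwΨ⟩ := hMaxcomp.exists_isMaxOn hMaxne Ψ_continuous.continuousOn
  have hwS : w ∈ S := hwMax.1
  have hPw : P w = M := hwMax.2
  have hmax' : ∀ c ∈ S (N := N) (n := n), P c ≤ P w := by rw [hPw]; exact hmax
  have hall : ∀ r s, w r = w s := by
    intro r s
    by_contra hne
    have hrs : r ≠ s := by rintro rfl; exact hne rfl
    obtain ⟨y, hyS, hPy, hΨ⟩ := merge hwS hmax' (by rw [hPw]; exact hMpos) hrs hne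
    have hyMax : y ∈ Max := ⟨hyS, show P y = M by rw [hPy, hPw]⟩
    have h2 : Ψ y ≤ Ψ w := hwΨ hyMax
    linarith
  have i0 : Fin n := ⟨0, hn⟩
  refine ⟨w i0, hwS i0, fun c hc => ?_⟩
  have hconst : (fun (_ : Fin n) => w i0) = w := funext fun r => hall i0 r
  unfold Q
  rw [hconst, hPw]
  exact hmax c hc



variable {N n : ℕ}

lemma Q_eq (v : Fin N → ℝ) : Q n v = ∑ e : Fin n ↪ Fin N, ∏ r, v (e r) := rfl

/-- product of an "ite at a point" over an injective tuple -/
lemma prod_ite_point (e : Fin n ↪ Fin N) (i : Fin N) (α : ℝ) :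
    ∏ r, (if e r = i then α else 1) = if ∃ r, e r = i then α else 1 := by
  classical
  by_cases h : ∃ r, e r = i
  · obtain ⟨r0, hr0⟩ := h
    rw [if_pos ⟨r0, hr0⟩]
    rw [Finset.prod_eq_single r0 (fun r _ hr => if_neg fun hc => hr (e.injective (by rw [hc, hr0])))
      (fun h => absurd (mem_univ r0) h)]
    rw [if_pos hr0]
  · rw [if_neg h]
    exact Finset.prod_eq_one fun r _ => if_neg fun hc => h ⟨r, hc⟩

lemma pointwise_factor {v : Fin N → ℝ} {i j : Fin N} (hij : i ≠ j) (α β : ℝ) (m : Fin N) :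
    (Function.update (Function.update v i α) j β) m
      = (if m = i then α else 1) *
        ((if m = j then β else 1) * (if m = i ∨ m = j then 1 else v m)) := by
  rcases eq_or_ne m i with h1 | h1
  · subst h1
    rw [Function.update_of_ne hij, Function.update_self, if_pos rfl,
      if_neg hij, if_pos (Or.inl rfl)]
    ring
  · rcases eq_or_ne m j with h2 | h2
    · subst h2
      rw [Function.update_self, if_neg h1, if_pos rfl, if_pos (Or.inr rfl)]
      ring
    · rw [Function.update_of_ne h2, Function.update_of_ne h1, if_neg h1, if_neg h2,
        if_neg (by tauto)]
      ring

noncomputable def ce (v : Fin N → ℝ) (i j : Fin N) (e : Fin n ↪ Fin N) : ℝ :=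
  ∏ r, (if e r = i ∨ e r = j then (1:ℝ) else v (e r))

lemma ce_nonneg {v : Fin N → ℝ} (hv : ∀ m, 0 ≤ v m) (i j : Fin N) (e : Fin n ↪ Fin N) :
    0 ≤ ce v i j e := by
  refine Finset.prod_nonneg fun r _ => ?_
  split
  · exact zero_le_one
  · exact hv _

lemma Q_decomp {v : Fin N → ℝ} {i j : Fin N} (hij : i ≠ j) (α β : ℝ) :
    Q n (Function.update (Function.update v i α) j β)
      = ∑ e : Fin n ↪ Fin N,
          (if ∃ r, e r = i then α else 1) * ((if ∃ r, e r = j then β else 1) * ce v i j e) := by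
  classical
  rw [Q_eq]
  refine Finset.sum_congr rfl fun e _ => ?_
  have h1 : ∀ r : Fin n, (Function.update (Function.update v i α) j β) (e r)
      = (if e r = i then α else 1) *
        ((if e r = j then β else 1) * (if e r = i ∨ e r = j then 1 else v (e r))) :=
    fun r => pointwise_factor hij α β (e r)
  rw [Finset.prod_congr rfl fun r _ => h1 r]
  rw [Finset.prod_mul_distrib, Finset.prod_mul_distrib]
  rw [prod_ite_point, prod_ite_point]
  rfl

lemma swap_mem_helper {i j : Fin N} (e : Fin n ↪ Fin N) (m : Fin N) :
    (∃ r, (e.trans (Equiv.swap i j).toEmbedding) r = m) ↔ (∃ r, e r = Equiv.swap i j m) := by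
  constructor
  · rintro ⟨r, hr⟩
    exact ⟨r, by
      have : (Equiv.swap i j) (e r) = m := hr
      rw [← this, Equiv.swap_apply_self]⟩
  · rintro ⟨r, hr⟩
    exact ⟨r, by
      show (Equiv.swap i j) (e r) = m
      rw [hr, Equiv.swap_apply_self]⟩

lemma ce_swap {v : Fin N → ℝ} {i j : Fin N} (e : Fin n ↪ Fin N) :
    ce v i j (e.trans (Equiv.swap i j).toEmbedding) = ce v i j e := by
  unfold ce
  refine Finset.prod_congr rfl fun r _ => ?_
  have : (e.trans (Equiv.swap i j).toEmbedding) r = Equiv.swap i j (e r) := rfl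
  rw [this]
  rcases eq_or_ne (e r) i with h1 | h1
  · rw [h1, Equiv.swap_apply_left, if_pos (Or.inr rfl), if_pos (Or.inl rfl)]
  · rcases eq_or_ne (e r) j with h2 | h2
    · rw [h2, Equiv.swap_apply_right, if_pos (Or.inl rfl), if_pos (Or.inr rfl)]
    · rw [Equiv.swap_apply_of_ne_of_ne h1 h2]




variable {N n : ℕ}

lemma Q_merge2 {v : Fin N → ℝ} (hv : ∀ m, 0 ≤ v m) {i j : Fin N} (hij : i ≠ j)
    {m : ℝ} (h0m : 0 ≤ m) (hm1 : v i + v j ≤ 2 * m) (hm2 : v i * v j ≤ m * m) :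
    Q n v ≤ Q n (Function.update (Function.update v i m) j m) := by
  classical
  set p : (Fin n ↪ Fin N) → Prop := fun e => ∃ r, e r = i with hp
  set q : (Fin n ↪ Fin N) → Prop := fun e => ∃ r, e r = j with hq
  have key : ∀ α β : ℝ,
      Q n (Function.update (Function.update v i α) j β)
        = (∑ e ∈ univ.filter (fun e => p e ∧ q e), ce v i j e) * (α * β)
          + ((∑ e ∈ univ.filter (fun e => p e ∧ ¬ q e), ce v i j e) * α
          + ((∑ e ∈ univ.filter (fun e => ¬ p e ∧ q e), ce v i j e) * β
          + (∑ e ∈ univ.filter (fun e => ¬ p e ∧ ¬ q e), ce v i j e))) := by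
    intro α β
    rw [Q_decomp hij]
    set F : (Fin n ↪ Fin N) → ℝ :=
      fun e => (if p e then α else 1) * ((if q e then β else 1) * ce v i j e) with hF
    have hsplit : ∑ e : Fin n ↪ Fin N, F e
        = (∑ e ∈ (univ.filter p).filter q, F e + ∑ e ∈ (univ.filter p).filter (fun e => ¬ q e), F e)
        + (∑ e ∈ (univ.filter fun e => ¬ p e).filter q, F e
           + ∑ e ∈ (univ.filter fun e => ¬ p e).filter (fun e => ¬ q e), F e) := by
      rw [Finset.sum_filter_add_sum_filter_not ((univ.filter p)) q F,
        Finset.sum_filter_add_sum_filter_not ((univ.filter fun e => ¬ p e)) q F,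
        Finset.sum_filter_add_sum_filter_not univ p F]
    rw [hsplit, Finset.filter_filter, Finset.filter_filter, Finset.filter_filter,
      Finset.filter_filter]
    have e11 : ∑ e ∈ univ.filter (fun e => p e ∧ q e), F e
        = (∑ e ∈ univ.filter (fun e => p e ∧ q e), ce v i j e) * (α * β) := by
      rw [Finset.sum_mul]
      refine Finset.sum_congr rfl fun e he => ?_
      obtain ⟨h1, h2⟩ := (Finset.mem_filter.1 he).2
      rw [hF]
      simp only
      rw [if_pos h1, if_pos h2]
      ring
    have e10 : ∑ e ∈ univ.filter (fun e => p e ∧ ¬ q e), F e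
        = (∑ e ∈ univ.filter (fun e => p e ∧ ¬ q e), ce v i j e) * α := by
      rw [Finset.sum_mul]
      refine Finset.sum_congr rfl fun e he => ?_
      obtain ⟨h1, h2⟩ := (Finset.mem_filter.1 he).2
      rw [hF]
      simp only
      rw [if_pos h1, if_neg h2]
      ring
    have e01 : ∑ e ∈ univ.filter (fun e => ¬ p e ∧ q e), F e
        = (∑ e ∈ univ.filter (fun e => ¬ p e ∧ q e), ce v i j e) * β := by
      rw [Finset.sum_mul]
      refine Finset.sum_congr rfl fun e he => ?_
      obtain ⟨h1, h2⟩ := (Finset.mem_filter.1 he).2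
      rw [hF]
      simp only
      rw [if_neg h1, if_pos h2]
      ring
    have e00 : ∑ e ∈ univ.filter (fun e => ¬ p e ∧ ¬ q e), F e
        = ∑ e ∈ univ.filter (fun e => ¬ p e ∧ ¬ q e), ce v i j e := by
      refine Finset.sum_congr rfl fun e he => ?_
      obtain ⟨h1, h2⟩ := (Finset.mem_filter.1 he).2
      rw [hF]
      simp only
      rw [if_neg h1, if_neg h2]
      ring
    rw [e11, e10, e01, e00]
    ring
  have hBC : ∑ e ∈ univ.filter (fun e => p e ∧ ¬ q e), ce v i j e
      = ∑ e ∈ univ.filter (fun e => ¬ p e ∧ q e), ce v i j e := by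
    refine Finset.sum_nbij' (fun e => e.trans (Equiv.swap i j).toEmbedding)
      (fun e => e.trans (Equiv.swap i j).toEmbedding) ?_ ?_ ?_ ?_ ?_
    · intro e he
      obtain ⟨h1, h2⟩ := (Finset.mem_filter.1 he).2
      refine Finset.mem_filter.2 ⟨mem_univ _, ?_, ?_⟩
      · show ¬ (∃ r, (e.trans (Equiv.swap i j).toEmbedding) r = i)
        intro hcon
        rw [swap_mem_helper, Equiv.swap_apply_left] at hcon
        exact h2 hcon
      · show (∃ r, (e.trans (Equiv.swap i j).toEmbedding) r = j)
        rw [swap_mem_helper, Equiv.swap_apply_right]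
        exact h1
    · intro e he
      obtain ⟨h1, h2⟩ := (Finset.mem_filter.1 he).2
      refine Finset.mem_filter.2 ⟨mem_univ _, ?_, ?_⟩
      · show (∃ r, (e.trans (Equiv.swap i j).toEmbedding) r = i)
        rw [swap_mem_helper, Equiv.swap_apply_left]
        exact h2
      · show ¬ (∃ r, (e.trans (Equiv.swap i j).toEmbedding) r = j)
        intro hcon
        rw [swap_mem_helper, Equiv.swap_apply_right] at hcon
        exact h1 hcon
    · intro e _
      ext r
      exact congrArg Fin.val (Equiv.swap_apply_self i j (e r))
    · intro e _
      ext r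
      exact congrArg Fin.val (Equiv.swap_apply_self i j (e r))
    · intro e _
      exact (ce_swap e).symm
  have hvv : Function.update (Function.update v i (v i)) j (v j) = v := by
    rw [Function.update_eq_self, Function.update_eq_self]
  have h1 := key (v i) (v j)
  have h2 := key m m
  rw [hvv] at h1
  rw [h1, h2]
  have c11 : 0 ≤ ∑ e ∈ univ.filter (fun e => p e ∧ q e), ce v i j e :=
    Finset.sum_nonneg fun e _ => ce_nonneg hv i j e
  have c10 : 0 ≤ ∑ e ∈ univ.filter (fun e => p e ∧ ¬ q e), ce v i j e :=
    Finset.sum_nonneg fun e _ => ce_nonneg hv i j e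
  rw [← hBC]
  have t1 : 0 ≤ (∑ e ∈ univ.filter (fun e => p e ∧ q e), ce v i j e) * (m * m - v i * v j) :=
    mul_nonneg c11 (by linarith)
  have t2 : 0 ≤ (∑ e ∈ univ.filter (fun e => p e ∧ ¬ q e), ce v i j e) * (2 * m - v i - v j) :=
    mul_nonneg c10 (by linarith)
  nlinarith [t1, t2]



variable {N n : ℕ}

lemma Q_continuous : Continuous (Q (N := N) n) := by
  unfold Q P
  exact continuous_finset_sum _ fun e _ => continuous_finset_prod _ fun r _ =>
    continuous_apply (e r)

lemma isCompact_S2 : IsCompact (S2 (N := N)) := by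
  have hclosed : IsClosed (S2 (N := N)) := by
    have : S2 (N := N) =
        (⋂ i, {v : Fin N → ℝ | 0 ≤ v i}) ∩ {v : Fin N → ℝ | ∑ i, (v i) ^ 2 = 1} := by
      ext v
      simp only [S2, Set.mem_setOf_eq, Set.mem_inter_iff, Set.mem_iInter]
    rw [this]
    exact IsClosed.inter (isClosed_iInter fun i =>
        isClosed_le continuous_const (continuous_apply i))
      (isClosed_eq (continuous_finset_sum _ fun i _ => (continuous_apply i).pow 2)
        continuous_const)
  refine Metric.isCompact_of_isClosed_isBounded hclosed ?_
  rw [Metric.isBounded_iff_subset_closedBall 0]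
  refine ⟨1, fun v hv => ?_⟩
  rw [Metric.mem_closedBall, dist_zero_right]
  rw [pi_norm_le_iff_of_nonneg zero_le_one]
  intro i
  rw [Real.norm_eq_abs, abs_le_one_iff_mul_self_le_one]
  have h1 : (v i) ^ 2 ≤ 1 := by
    calc (v i) ^ 2 ≤ ∑ i', (v i') ^ 2 :=
          Finset.single_le_sum (f := fun i' => (v i') ^ 2) (fun i' _ => sq_nonneg _) (mem_univ i)
      _ = 1 := hv.2
  nlinarith [h1]

lemma sum_update2_eval {v : Fin N → ℝ} {i j : Fin N} (hij : i ≠ j) (m : ℝ) (f : ℝ → ℝ) :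
    ∑ k, f ((Function.update (Function.update v i m) j m) k)
      = f m + f m + ((∑ k, f (v k)) - f (v i) - f (v j)) := by
  have heval : ∀ k, f ((Function.update (Function.update v i m) j m) k)
      = (Function.update (Function.update (fun q => f (v q)) i (f m)) j (f m)) k := by
    intro k
    rcases eq_or_ne k j with h | h
    · subst h; rw [Function.update_self, Function.update_self]
    · rw [Function.update_of_ne h, Function.update_of_ne h]
      rcases eq_or_ne k i with h2 | h2
      · subst h2; rw [Function.update_self, Function.update_self]
      · rw [Function.update_of_ne h2, Function.update_of_ne h2]
  rw [Finset.sum_congr rfl fun k _ => heval k]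
  have hij' : i ∈ univ \ ({j} : Finset (Fin N)) := by simp [hij]
  rw [Finset.sum_update_of_mem (mem_univ j), Finset.sum_update_of_mem hij']
  have hsum : ∑ k, f (v k) = f (v j) + (f (v i) + ∑ k ∈ (univ \ {j}) \ {i}, f (v k)) := by
    rw [Finset.sum_eq_add_sum_sdiff_singleton_of_mem (mem_univ j) (fun q => f (v q))]
    congr 1
    rw [Finset.sum_eq_add_sum_sdiff_singleton_of_mem hij' (fun q => f (v q))]
  rw [hsum]
  ring

lemma Q_diag_bound (hn : 0 < n) (hnN : n ≤ N) {v : Fin N → ℝ} (hv : v ∈ S2 (N := N)) :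
    Q n v ≤ (Fintype.card (Fin n ↪ Fin N) : ℝ) * ((Real.sqrt N)⁻¹) ^ n := by
  classical
  have hN : 0 < N := lt_of_lt_of_le hn hnN
  have hS2ne : (S2 (N := N)).Nonempty := ⟨v, hv⟩
  obtain ⟨x, hxS, hxmax⟩ := isCompact_S2.exists_isMaxOn hS2ne Q_continuous.continuousOn
  have hmax : ∀ u ∈ S2 (N := N), Q n u ≤ Q n x := fun u hu => hxmax hu
  set Max2 : Set (Fin N → ℝ) := S2 ∩ {u | Q n u = Q n x} with hMax2
  have hMcomp : IsCompact Max2 :=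
    isCompact_S2.inter_right (isClosed_eq Q_continuous continuous_const)
  have hMne : Max2.Nonempty := ⟨x, hxS, rfl⟩
  have hφcont : Continuous (fun u : Fin N → ℝ => ∑ i, u i) :=
    continuous_finset_sum _ fun i _ => continuous_apply i
  obtain ⟨w, hwM, hwφ⟩ := hMcomp.exists_isMaxOn hMne hφcont.continuousOn
  have hwS : w ∈ S2 := hwM.1
  have hQw : Q n w = Q n x := hwM.2
  have hall : ∀ i j, w i = w j := by
    intro i j
    by_contra hne
    have hij : i ≠ j := by rintro rfl; exact hne rfl
    set m : ℝ := Real.sqrt ((w i ^ 2 + w j ^ 2) / 2) with hm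
    have hm0 : 0 ≤ m := Real.sqrt_nonneg _
    have hm2 : m ^ 2 = (w i ^ 2 + w j ^ 2) / 2 := Real.sq_sqrt (by positivity)
    have hstrict : w i + w j < 2 * m := by
      have h1 : (w i + w j) ^ 2 < (2 * m) ^ 2 := by
        have : (2 * m) ^ 2 = 2 * (w i ^ 2 + w j ^ 2) := by rw [mul_pow, hm2]; ring
        rw [this]
        have hd : 0 < (w i - w j) ^ 2 :=
          lt_of_le_of_ne (sq_nonneg _) (Ne.symm (pow_ne_zero _ (sub_ne_zero.2 hne)))
        nlinarith [hd]
      have h2 : 0 ≤ w i + w j := by linarith [(hwS.1 i), (hwS.1 j)]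
      nlinarith [h1, h2, hm0]
    have hmul : w i * w j ≤ m * m := by nlinarith [sq_nonneg (w i - w j), hm2]
    set w' := Function.update (Function.update w i m) j m with hw'
    have hw'S : w' ∈ S2 := by
      constructor
      · intro k
        rcases eq_or_ne k j with h | h
        · subst h; rw [hw', Function.update_self]; exact hm0
        · rw [hw', Function.update_of_ne h]
          rcases eq_or_ne k i with h2 | h2
          · subst h2; rw [Function.update_self]; exact hm0
          · rw [Function.update_of_ne h2]; exact hwS.1 k
      · have := sum_update2_eval (v := w) hij m (fun t => t ^ 2)
        rw [hw', this, hwS.2, hm2]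
        ring
    have hQ : Q n w ≤ Q n w' := Q_merge2 hwS.1 hij hm0 (le_of_lt hstrict) hmul
    have hw'M : w' ∈ Max2 := ⟨hw'S, le_antisymm (hmax w' hw'S) (by rw [← hQw]; exact hQ)⟩
    have hφ : (∑ i, w i) < ∑ i, w' i := by
      have := sum_update2_eval (v := w) hij m (fun t => t)
      rw [hw', this]
      linarith [hstrict]
    have h2 : (∑ i, w' i) ≤ ∑ i, w i := hwφ hw'M
    linarith
  -- w is constant
  have i0 : Fin N := ⟨0, hN⟩
  have hwc : ∀ k, w k = w i0 := fun k => hall k i0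
  have hval : w i0 = (Real.sqrt N)⁻¹ := by
    have h1 : (N : ℝ) * (w i0) ^ 2 = 1 := by
      have := hwS.2
      rw [Finset.sum_congr rfl fun k _ => by rw [hwc k]] at this
      rw [Finset.sum_const, card_univ, Fintype.card_fin, nsmul_eq_mul] at this
      exact this
    have h2 : (w i0) ^ 2 = (N : ℝ)⁻¹ := by
      field_simp at h1 ⊢
      linarith [h1]
    have h3 : w i0 = Real.sqrt ((N : ℝ)⁻¹) := by
      rw [← h2, Real.sqrt_sq (hwS.1 i0)]
    rw [h3, Real.sqrt_inv]
  have hQwval : Q n w = (Fintype.card (Fin n ↪ Fin N) : ℝ) * ((Real.sqrt N)⁻¹) ^ n := by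
    unfold Q P
    have : ∀ e : Fin n ↪ Fin N, ∏ r : Fin n, w (e r) = ((Real.sqrt N)⁻¹) ^ n := by
      intro e
      rw [Finset.prod_congr rfl fun r _ => by rw [hwc (e r), hval]]
      rw [Finset.prod_const, card_univ, Fintype.card_fin]
    rw [Finset.sum_congr rfl fun e _ => this e, Finset.sum_const, card_univ, nsmul_eq_mul]
  calc Q n v ≤ Q n x := hmax v hv
    _ = Q n w := hQw.symm
    _ = _ := hQwval


lemma P_bound (hn : 0 < n) (hnN : n ≤ N) (c : Fin n → Fin N → ℝ)
    (hc : ∀ r i, 0 ≤ c r i) :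
    P c ≤ (Fintype.card (Fin n ↪ Fin N) : ℝ) * ((Real.sqrt N)⁻¹) ^ n *
      ∏ r, Real.sqrt (∑ i, (c r i) ^ 2) := by
  classical
  by_cases hz : ∀ r, 0 < ∑ i, (c r i) ^ 2
  · set d : Fin n → ℝ := fun r => Real.sqrt (∑ i, (c r i) ^ 2) with hd_def
    have hd : ∀ r, 0 < d r := fun r => Real.sqrt_pos.2 (hz r)
    have hd2 : ∀ r, (d r) ^ 2 = ∑ i, (c r i) ^ 2 := fun r =>
      Real.sq_sqrt (Finset.sum_nonneg fun i _ => sq_nonneg _)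
    set c' : Fin n → Fin N → ℝ := fun r i => c r i / d r with hc'_def
    have hrepr : c = fun r i => d r * c' r i := by
      funext r i
      rw [hc'_def]
      simp only
      rw [mul_div_assoc', mul_comm, mul_div_assoc, div_self (hd r).ne', mul_one]
    have hc'S : c' ∈ S (N := N) (n := n) := by
      intro r
      constructor
      · intro i; exact div_nonneg (hc r i) (hd r).le
      · have : ∀ i, (c' r i) ^ 2 = (c r i) ^ 2 / (d r) ^ 2 := fun i => by
          rw [hc'_def]; rw [div_pow]
        simp only [this]
        rw [← Finset.sum_div, ← hd2 r, div_self (pow_ne_zero _ (hd r).ne')]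
    have h1 : P c = (∏ r, d r) * P c' := by
      conv_lhs => rw [hrepr]
      exact P_smul d c'
    obtain ⟨v, hvS2, hdom⟩ := exists_diag_dominates hn hnN
    have h2 : P c' ≤ (Fintype.card (Fin n ↪ Fin N) : ℝ) * ((Real.sqrt N)⁻¹) ^ n :=
      le_trans (hdom c' hc'S) (Q_diag_bound hn hnN hvS2)
    rw [h1]
    have h3 : (∏ r, d r) * P c' ≤ (∏ r, d r) *
        ((Fintype.card (Fin n ↪ Fin N) : ℝ) * ((Real.sqrt N)⁻¹) ^ n) :=
      mul_le_mul_of_nonneg_left h2 (Finset.prod_nonneg fun r _ => (hd r).le)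
    calc (∏ r, d r) * P c' ≤ _ := h3
      _ = (Fintype.card (Fin n ↪ Fin N) : ℝ) * ((Real.sqrt N)⁻¹) ^ n * ∏ r, d r := by ring
  · push_neg at hz
    obtain ⟨r0, hr0⟩ := hz
    have hzero : ∀ i, c r0 i = 0 := by
      have hs0 : ∑ i, (c r0 i) ^ 2 = 0 :=
        le_antisymm hr0 (Finset.sum_nonneg fun i _ => sq_nonneg _)
      intro i
      have := (Finset.sum_eq_zero_iff_of_nonneg (fun i _ => sq_nonneg (c r0 i))).1 hs0 i
        (mem_univ i)
      exact pow_eq_zero_iff two_ne_zero |>.1 this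
    have hP0 : P c = 0 := by
      unfold P
      refine Finset.sum_eq_zero fun e _ => ?_
      exact Finset.prod_eq_zero (mem_univ r0) (hzero (e r0))
    rw [hP0]
    positivity

end CLL

/-- Hadamard-type permanent inequality for rectangular matrices
(Lemma 10(a) of the paper). -/
theorem stmt_10 (N n : ℕ) (hn : 1 ≤ n) (hnN : n ≤ N) (z : Fin N → Fin n → ℂ) :
    ‖∑ j : Fin n ↪ Fin N, ∏ r : Fin n, z (j r) r‖
      ≤ ((N.factorial : ℝ) / ((N - n).factorial : ℝ)) *
          ∏ r : Fin n,
            Real.sqrt ((1 / (N : ℝ)) * ∑ j : Fin N, ‖z j r‖ ^ 2) := by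
  classical
  have hN : 0 < N := lt_of_lt_of_le hn hnN
  set c : Fin n → Fin N → ℝ := fun r i => ‖z i r‖ with hc_def
  have h1 : ‖∑ j : Fin n ↪ Fin N, ∏ r : Fin n, z (j r) r‖ ≤ CLL.P c := by
    refine le_trans (norm_sum_le _ _) ?_
    unfold CLL.P
    refine le_of_eq (Finset.sum_congr rfl fun e _ => ?_)
    rw [norm_prod]
  have h2 := CLL.P_bound hn hnN c (fun r i => norm_nonneg _)
  have hcard : (Fintype.card (Fin n ↪ Fin N) : ℝ)
      = (N.factorial : ℝ) / ((N - n).factorial : ℝ) := by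
    rw [Fintype.card_embedding_eq, Fintype.card_fin, Fintype.card_fin]
    have hmul := Nat.factorial_mul_descFactorial hnN
    have : ((N - n).factorial : ℝ) * (N.descFactorial n : ℝ) = (N.factorial : ℝ) := by
      exact_mod_cast congrArg (Nat.cast (R := ℝ)) hmul
    field_simp [Nat.factorial_ne_zero]
    linarith [this]
  have hsqrt : ∀ r : Fin n, Real.sqrt ((1 / (N : ℝ)) * ∑ j : Fin N, ‖z j r‖ ^ 2)
      = (Real.sqrt N)⁻¹ * Real.sqrt (∑ i, (c r i) ^ 2) := by
    intro r
    rw [Real.sqrt_mul (by positivity)]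
    congr 1
    rw [one_div, Real.sqrt_inv]
  have hRHS : ((N.factorial : ℝ) / ((N - n).factorial : ℝ)) *
      ∏ r : Fin n, Real.sqrt ((1 / (N : ℝ)) * ∑ j : Fin N, ‖z j r‖ ^ 2)
      = (Fintype.card (Fin n ↪ Fin N) : ℝ) * ((Real.sqrt N)⁻¹) ^ n *
        ∏ r, Real.sqrt (∑ i, (c r i) ^ 2) := by
    rw [Finset.prod_congr rfl fun r _ => hsqrt r, Finset.prod_mul_distrib,
      Finset.prod_const, card_univ, Fintype.card_fin, hcard]
    ring
  rw [hRHS]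
  exact le_trans h1 h2
end

section
/- Let n = 2 ≤ N, Z = (z_{j,r}) an N×2 complex matrix, z̃_r = (1/N)∑_{j=1}^N z_{j,r}, and Per(Z) = ∑_{(j_1,j_2), j_1≠j_2} z_{j_1,1}·z_{j_2,2}. Then ((N−2)!/N!)·Per(Z) − z̃_1·z̃_2 = −(1/(2N²(N−1))) · ∑_{(u,v), u≠v} (z_{u,1}−z_{v,1})(z_{u,2}−z_{v,2}), where the sums run over ordered pairs of distinct elements of {1,…,N}. -/
lemma ite_ne_sum {N : ℕ} (f : Fin N → Fin N → ℂ) :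
    ∑ u : Fin N, ∑ v : Fin N, (if u ≠ v then f u v else 0)
      = (∑ u : Fin N, ∑ v : Fin N, f u v) - ∑ u : Fin N, f u u := by
  rw [← Finset.sum_sub_distrib]
  refine Finset.sum_congr rfl (fun u _ => ?_)
  have : ∀ v, (if u ≠ v then f u v else 0) = f u v - if u = v then f u v else 0 := by
    intro v; split_ifs with h h2 <;> simp_all
  simp only [this, Finset.sum_sub_distrib, Finset.sum_ite_eq, Finset.mem_univ, if_true]

/-- The case `n = 2` (identity (23) of the paper). -/
theorem stmt_11 (N : ℕ) (hN : 2 ≤ N) (z : Fin N → Fin 2 → ℂ)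
    (zt : Fin 2 → ℂ) (hzt : ∀ r, zt r = (1 / (N : ℂ)) * ∑ j : Fin N, z j r) :
    (((N - 2).factorial : ℂ) / (N.factorial : ℂ)) *
        (∑ u : Fin N, ∑ v : Fin N,
          if u ≠ v then z u 0 * z v 1 else 0)
      - zt 0 * zt 1
    = -(1 / (2 * (N : ℂ) ^ 2 * ((N : ℂ) - 1))) *
        ∑ u : Fin N, ∑ v : Fin N,
          if u ≠ v then (z u 0 - z v 0) * (z u 1 - z v 1) else 0 := by
  obtain ⟨m, rfl⟩ : ∃ m, N = m + 2 := ⟨N - 2, by omega⟩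
  set S0 := ∑ j : Fin (m+2), z j 0 with hS0
  set S1 := ∑ j : Fin (m+2), z j 1 with hS1
  set D := ∑ j : Fin (m+2), z j 0 * z j 1 with hD
  have hA : ∑ u : Fin (m+2), ∑ v : Fin (m+2), (if u ≠ v then z u 0 * z v 1 else 0)
      = S0 * S1 - D := by
    rw [ite_ne_sum]
    congr 1
    rw [Finset.sum_mul_sum]
  have hB : ∑ u : Fin (m+2), ∑ v : Fin (m+2),
      (if u ≠ v then (z u 0 - z v 0) * (z u 1 - z v 1) else 0)
      = 2 * ((m+2 : ℕ) : ℂ) * D - 2 * (S0 * S1) := by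
    rw [ite_ne_sum]
    have : ∀ u : Fin (m+2), ∑ v : Fin (m+2), (z u 0 - z v 0) * (z u 1 - z v 1)
        = ((m+2 : ℕ) : ℂ) * (z u 0 * z u 1) - z u 0 * S1 - S0 * z u 1 + D := by
      intro u
      simp only [sub_mul, mul_sub, Finset.sum_sub_distrib, Finset.sum_add_distrib,
        Finset.sum_const, Finset.card_univ, Fintype.card_fin, nsmul_eq_mul,
        ← Finset.mul_sum, ← Finset.sum_mul, hS0, hS1, hD]
      ring
    rw [Finset.sum_congr rfl (fun u _ => this u)]
    simp only [Finset.sum_add_distrib, Finset.sum_sub_distrib, ← Finset.mul_sum,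
      ← Finset.sum_mul, Finset.sum_const, Finset.card_univ, Fintype.card_fin,
      nsmul_eq_mul, sub_self, zero_mul, Finset.sum_const_zero, hS0, hS1, hD]
    ring
  have hfacn : ((m+2).factorial : ℂ) = ((m:ℂ)+2) * ((m:ℂ)+1) * (m.factorial : ℂ) := by
    have h1 : (m+2).factorial = (m+2) * (m+1) * m.factorial := by
      rw [Nat.factorial_succ, Nat.factorial_succ]; ring
    rw [h1]; push_cast; ring
  have hfacne : ((m.factorial : ℕ) : ℂ) ≠ 0 := Nat.cast_ne_zero.2 (Nat.factorial_ne_zero _)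
  have h2 : ((m : ℂ) + 2) ≠ 0 := by
    have : ((m+2 : ℕ) : ℂ) ≠ 0 := Nat.cast_ne_zero.2 (by omega)
    push_cast at this; exact this
  have h1 : ((m : ℂ) + 1) ≠ 0 := by
    have : ((m+1 : ℕ) : ℂ) ≠ 0 := Nat.cast_ne_zero.2 (by omega)
    push_cast at this; exact this
  have hq : ((m.factorial : ℕ) : ℂ) / (((m+2).factorial : ℕ) : ℂ)
      = 1 / (((m:ℂ)+2) * ((m:ℂ)+1)) := by
    rw [hfacn]
    field_simp
  rw [hA, hB, hzt 0, hzt 1, ← hS0, ← hS1, show m+2-2 = m from rfl, hq]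
  push_cast
  rw [show ((m:ℂ)+2)-1 = (m:ℂ)+1 from by ring]
  field_simp
  ring
end

section
/- Let 2 ≤ n ≤ N and Z = (z_{j,r}) an N×n complex matrix. Set z̃_r = (1/N)∑_j z_{j,r}, α = (1/(nN))·∑_{r=1}^n ∑_{j=1}^N |z_{j,r}−z̃_r|², and ϑ = (1/(N(N−1)√(n(n−1)))) · (∑_{(r,s), r≠s} (∑_{(u,v), u≠v} |z_{u,r}−z_{v,r}|·|z_{u,s}−z_{v,s}|)²)^{1/2}, where (r,s) ranges over ordered pairs of distinct elements of {1,…,n} and (u,v) over ordered pairs of distinct elements of {1,…,N}. Then ϑ ≤ 2Nα/(N−1). -/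
open Finset

lemma sq_sum_le' {n : ℕ} (f : Fin n → ℝ) :
    (∑ i, f i) ^ 2 ≤ n * ∑ i, f i ^ 2 := by
  have h := Finset.sum_mul_sq_le_sq_mul_sq Finset.univ f (fun _ => 1)
  simpa [Finset.card_univ, mul_comm] using h

lemma sum_sq_dist {N : ℕ} (w : Fin N → ℂ) (hw : ∑ j, w j = 0) :
    ∑ u : Fin N, ∑ v : Fin N, ‖w u - w v‖ ^ 2
      = 2 * N * ∑ j, ‖w j‖ ^ 2 := by
  have key : ∀ u v : Fin N, ‖w u - w v‖ ^ 2
      = ‖w u‖ ^ 2 + ‖w v‖ ^ 2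
        - 2 * (w u * (starRingEnd ℂ) (w v)).re := by
    intro u v
    rw [Complex.sq_norm, Complex.sq_norm, Complex.sq_norm, Complex.normSq_sub]
  have cross : ∑ u : Fin N, ∑ v : Fin N, (w u * (starRingEnd ℂ) (w v)).re = 0 := by
    have h2 : ∑ u : Fin N, ∑ v : Fin N, (w u * (starRingEnd ℂ) (w v)) = 0 := by
      rw [← Finset.sum_mul_sum, hw, zero_mul]
    calc ∑ u : Fin N, ∑ v : Fin N, (w u * (starRingEnd ℂ) (w v)).re
        = (∑ u : Fin N, ∑ v : Fin N, (w u * (starRingEnd ℂ) (w v))).re := by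
          rw [Complex.re_sum]; exact Finset.sum_congr rfl fun u _ => (Complex.re_sum _ _).symm
      _ = 0 := by rw [h2]; simp
  simp only [key]
  simp only [Finset.sum_sub_distrib, Finset.sum_add_distrib, Finset.sum_const,
    Finset.card_univ, Fintype.card_fin, nsmul_eq_mul, ← Finset.mul_sum]
  rw [cross]
  ring_nf

set_option maxHeartbeats 1000000 in
/-- Inequality (25): `ϑ ≤ 2Nα/(N−1)`. -/
theorem stmt_12 (N n : ℕ) (hn : 2 ≤ n) (hnN : n ≤ N) (z : Fin N → Fin n → ℂ)
    (zt : Fin n → ℂ) (hzt : ∀ r, zt r = (1 / (N : ℂ)) * ∑ j : Fin N, z j r)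
    (α θ : ℝ)
    (hα : α = (1 / ((n : ℝ) * N)) *
      ∑ r : Fin n, ∑ j : Fin N, ‖z j r - zt r‖ ^ 2)
    (hθ : θ = (1 / ((N : ℝ) * ((N : ℝ) - 1) * Real.sqrt ((n : ℝ) * ((n : ℝ) - 1)))) *
      Real.sqrt (∑ r : Fin n, ∑ s : Fin n,
        if r ≠ s then
          (∑ u : Fin N, ∑ v : Fin N,
            if u ≠ v then
              ‖z u r - z v r‖ * ‖z u s - z v s‖
            else 0) ^ 2
        else 0)) :
    θ ≤ 2 * (N : ℝ) * α / ((N : ℝ) - 1) := by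
  have hN : 2 ≤ N := le_trans hn hnN
  have hNR : (1:ℝ) < (N:ℝ) := by exact_mod_cast Nat.lt_of_lt_of_le one_lt_two hN
  have hnR : (1:ℝ) < (n:ℝ) := by exact_mod_cast Nat.lt_of_lt_of_le one_lt_two hn
  have hN0 : (0:ℝ) < N := lt_trans one_pos hNR
  have hn0 : (0:ℝ) < n := lt_trans one_pos hnR
  set S : Fin n → ℝ := fun r => ∑ u : Fin N, ∑ v : Fin N, ‖z u r - z v r‖ ^ 2 with hS
  have hS0 : ∀ r, 0 ≤ S r := fun r =>
    Finset.sum_nonneg fun u _ => Finset.sum_nonneg fun v _ => sq_nonneg _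
  have hSval : ∀ r, S r = 2 * N * ∑ j, ‖z j r - zt r‖ ^ 2 := by
    intro r
    have hNc : (N:ℂ) ≠ 0 := Nat.cast_ne_zero.2 (by omega)
    have hw : ∑ j, (z j r - zt r) = 0 := by
      rw [Finset.sum_sub_distrib, Finset.sum_const, Finset.card_univ, Fintype.card_fin,
        hzt r]
      rw [nsmul_eq_mul]; field_simp; ring
    have := sum_sq_dist (fun j => z j r - zt r) hw
    simpa [hS, sub_sub_sub_cancel_right] using this
  have hTdrop : ∀ r s : Fin n,
      (∑ u : Fin N, ∑ v : Fin N,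
        if u ≠ v then ‖z u r - z v r‖ * ‖z u s - z v s‖ else 0)
      = ∑ u : Fin N, ∑ v : Fin N,
          ‖z u r - z v r‖ * ‖z u s - z v s‖ := by
    intro r s
    refine Finset.sum_congr rfl fun u _ => Finset.sum_congr rfl fun v _ => ?_
    by_cases h : u = v
    · subst h; simp
    · simp [h]
  have hCS : ∀ r s : Fin n,
      (∑ u : Fin N, ∑ v : Fin N,
          ‖z u r - z v r‖ * ‖z u s - z v s‖) ^ 2
        ≤ S r * S s := by
    intro r s
    have h := Finset.sum_mul_sq_le_sq_mul_sq (Finset.univ : Finset (Fin N × Fin N))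
      (fun p => ‖z p.1 r - z p.2 r‖) (fun p => ‖z p.1 s - z p.2 s‖)
    simpa [Fintype.sum_prod_type, hS] using h
  set P : ℝ := ∑ r : Fin n, ∑ s : Fin n,
        if r ≠ s then
          (∑ u : Fin N, ∑ v : Fin N,
            if u ≠ v then
              ‖z u r - z v r‖ * ‖z u s - z v s‖
            else 0) ^ 2
        else 0 with hP
  set C : ℝ := ∑ r, S r with hCdef
  have hC0 : 0 ≤ C := Finset.sum_nonneg fun r _ => hS0 r
  have hPle : P ≤ ((n:ℝ) - 1) / n * C ^ 2 := by
    have step1 : P ≤ ∑ r : Fin n, ∑ s : Fin n, (if r ≠ s then S r * S s else 0) := by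
      refine Finset.sum_le_sum fun r _ => Finset.sum_le_sum fun s _ => ?_
      by_cases h : r = s
      · simp [h]
      · simp only [if_pos h, ne_eq, h, not_false_eq_true]
        rw [hTdrop r s]
        exact hCS r s
    have step2 : ∑ r : Fin n, ∑ s : Fin n, (if r ≠ s then S r * S s else 0)
        = C ^ 2 - ∑ r, S r ^ 2 := by
      have hrow : ∀ r : Fin n, ∑ s : Fin n, (if r ≠ s then S r * S s else 0)
          = S r * C - S r * S r := by
        intro r
        have h1 : ∀ s : Fin n, (if r ≠ s then S r * S s else 0)
            = S r * S s - (if r = s then S r * S s else 0) := by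
          intro s; by_cases h : r = s <;> simp [h]
        rw [Finset.sum_congr rfl fun s _ => h1 s, Finset.sum_sub_distrib,
          Finset.sum_ite_eq, if_pos (Finset.mem_univ r), ← Finset.mul_sum, hCdef]
      rw [Finset.sum_congr rfl fun r _ => hrow r, Finset.sum_sub_distrib,
        ← Finset.sum_mul, ← hCdef, sq]
      congr 1
      exact Finset.sum_congr rfl fun r _ => (sq (S r)) ▸ by ring
    have step3 : C ^ 2 - ∑ r, S r ^ 2 ≤ ((n:ℝ) - 1) / n * C ^ 2 := by
      have h := sq_sum_le' S
      rw [← hCdef] at h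
      rw [div_mul_eq_mul_div, le_div_iff₀ hn0, sub_mul]
      nlinarith [h]
    linarith
  -- value of C
  have hCval : C = 2 * N * ((n:ℝ) * N * α) := by
    have hT : (n:ℝ) * N * α = ∑ r : Fin n, ∑ j : Fin N, ‖z j r - zt r‖ ^ 2 := by
      rw [hα]; field_simp
    rw [hCdef, Finset.sum_congr rfl fun r _ => hSval r, ← Finset.mul_sum, ← hT]
  -- sqrt facts
  have hnn1 : (0:ℝ) < (n:ℝ) * ((n:ℝ) - 1) := by nlinarith
  have hD : (0:ℝ) < Real.sqrt ((n:ℝ) * ((n:ℝ) - 1)) := Real.sqrt_pos.2 hnn1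
  have hD2 : Real.sqrt ((n:ℝ) * ((n:ℝ) - 1)) ^ 2 = (n:ℝ) * ((n:ℝ) - 1) :=
    Real.sq_sqrt hnn1.le
  have hE : Real.sqrt (((n:ℝ) - 1) / n) = ((n:ℝ) - 1) / Real.sqrt ((n:ℝ) * ((n:ℝ) - 1)) := by
    rw [eq_div_iff hD.ne']
    rw [← Real.sqrt_mul (div_nonneg (by linarith) hn0.le)]
    have h : ((n:ℝ) - 1) / n * ((n:ℝ) * ((n:ℝ) - 1)) = ((n:ℝ) - 1) ^ 2 := by
      field_simp
    rw [h, Real.sqrt_sq (by linarith)]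
  have hsqrtP : Real.sqrt P ≤ Real.sqrt (((n:ℝ) - 1) / n) * C := by
    have h := Real.sqrt_le_sqrt hPle
    rwa [Real.sqrt_mul (div_nonneg (by linarith) hn0.le), Real.sqrt_sq hC0] at h
  have hk0 : 0 ≤ 1 / ((N:ℝ) * ((N:ℝ) - 1) * Real.sqrt ((n:ℝ) * ((n:ℝ) - 1))) :=
    le_of_lt (one_div_pos.2 (mul_pos (mul_pos hN0 (by linarith)) hD))
  calc θ ≤ 1 / ((N:ℝ) * ((N:ℝ) - 1) * Real.sqrt ((n:ℝ) * ((n:ℝ) - 1)))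
        * (Real.sqrt (((n:ℝ) - 1) / n) * C) := by
        rw [hθ]; exact mul_le_mul_of_nonneg_left hsqrtP hk0
    _ = 2 * (N:ℝ) * α / ((N:ℝ) - 1) := by
        rw [hE, hCval]
        have hDD : Real.sqrt ((n:ℝ)*((n:ℝ)-1)) * Real.sqrt ((n:ℝ)*((n:ℝ)-1))
            = (n:ℝ)*((n:ℝ)-1) := by rw [← sq]; exact hD2
        rw [div_mul_eq_mul_div, one_mul, div_mul_eq_mul_div, div_div,
          show Real.sqrt ((n:ℝ)*((n:ℝ)-1)) * ((N:ℝ)*((N:ℝ)-1)*Real.sqrt ((n:ℝ)*((n:ℝ)-1)))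
            = ((N:ℝ)*((N:ℝ)-1))*((n:ℝ)*((n:ℝ)-1))
          from by linear_combination ((N:ℝ)*((N:ℝ)-1)) * hDD]
        rw [div_eq_div_iff (ne_of_gt (mul_pos (mul_pos hN0 (by linarith : (0:ℝ) < (N:ℝ) - 1)) hnn1)) (ne_of_gt (by linarith : (0:ℝ) < (N:ℝ) - 1))]
        ring
end

section
/- Let n ≥ 2 and z_1,…,z_n ∈ ℂ with |z_j| ≤ 1 for all j, and z̃ = (1/n)∑_{j=1}^n z_j. Then |∏_{j=1}^n z_j − z̃^n| ≤ (1/2)·∑_{j=1}^n |z_j − z̃|². -/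
open Finset Filter

namespace Stmt15Aux

lemma split3_add {n : ℕ} {j k : Fin n} (hjk : j ≠ k) (f : Fin n → ℂ) :
    ∑ i, f i = f j + f k + ∑ i ∈ (Finset.univ.erase j).erase k, f i := by
  have hk : k ∈ Finset.univ.erase j := Finset.mem_erase.mpr ⟨hjk.symm, Finset.mem_univ k⟩
  rw [← Finset.add_sum_erase _ f (Finset.mem_univ j), ← Finset.add_sum_erase _ f hk, ← add_assoc]

lemma split3_addR {n : ℕ} {j k : Fin n} (hjk : j ≠ k) (f : Fin n → ℝ) :
    ∑ i, f i = f j + f k + ∑ i ∈ (Finset.univ.erase j).erase k, f i := by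
  have hk : k ∈ Finset.univ.erase j := Finset.mem_erase.mpr ⟨hjk.symm, Finset.mem_univ k⟩
  rw [← Finset.add_sum_erase _ f (Finset.mem_univ j), ← Finset.add_sum_erase _ f hk, ← add_assoc]

lemma split3_mul {n : ℕ} {j k : Fin n} (hjk : j ≠ k) (f : Fin n → ℂ) :
    ∏ i, f i = f j * f k * ∏ i ∈ (Finset.univ.erase j).erase k, f i := by
  have hk : k ∈ Finset.univ.erase j := Finset.mem_erase.mpr ⟨hjk.symm, Finset.mem_univ k⟩
  rw [← Finset.mul_prod_erase _ f (Finset.mem_univ j), ← Finset.mul_prod_erase _ f hk, ← mul_assoc]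

lemma abs_prod_sub_prod_le {n : ℕ} (s : Finset (Fin n)) (a b : Fin n → ℂ)
    (ha : ∀ i, ‖a i‖ ≤ 1) (hb : ∀ i, ‖b i‖ ≤ 1) :
    ‖(∏ i ∈ s, a i) - ∏ i ∈ s, b i‖ ≤ ∑ i ∈ s, ‖a i - b i‖ := by
  induction s using Finset.cons_induction with
  | empty => simp
  | cons j s hj ih =>
    rw [Finset.prod_cons, Finset.prod_cons, Finset.sum_cons]
    have key : a j * ∏ i ∈ s, a i - b j * ∏ i ∈ s, b i
        = a j * ((∏ i ∈ s, a i) - ∏ i ∈ s, b i) + (a j - b j) * ∏ i ∈ s, b i := by ring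
    rw [key]
    refine (norm_add_le _ _).trans ?_
    rw [norm_mul, norm_mul]
    have hb1 : ‖∏ i ∈ s, b i‖ ≤ 1 := by
      rw [norm_prod]
      exact Finset.prod_le_one (fun i _ => norm_nonneg _) (fun i _ => hb i)
    have h1 : ‖a j‖ * ‖(∏ i ∈ s, a i) - ∏ i ∈ s, b i‖
        ≤ ∑ i ∈ s, ‖a i - b i‖ :=
      (mul_le_of_le_one_left (norm_nonneg _) (ha j)).trans ih
    have h2 : ‖a j - b j‖ * ‖∏ i ∈ s, b i‖
        ≤ ‖a j - b j‖ :=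
      mul_le_of_le_one_right (norm_nonneg _) hb1
    linarith

lemma para (x d : ℂ) : Complex.normSq (x + d) + Complex.normSq (x - d)
    = 2 * Complex.normSq x + 2 * Complex.normSq d := by
  rw [Complex.normSq_add, Complex.normSq_sub]; ring

noncomputable def V (n : ℕ) (m : ℂ) (w : Fin n → ℂ) : ℝ :=
  ∑ i, Complex.normSq (w i - m)

lemma V_nonneg (n : ℕ) (m : ℂ) (w : Fin n → ℂ) : 0 ≤ V n m w :=
  Finset.sum_nonneg fun i _ => Complex.normSq_nonneg _

lemma sum_sq_pairs (n : ℕ) (m : ℂ) (w : Fin n → ℂ)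
    (hsum : ∑ i, (w i - m) = 0) :
    ∑ j, ∑ k, Complex.normSq (w j - w k) = 2 * n * V n m w := by
  have inner : ∀ j, ∑ k, Complex.normSq (w j - w k)
      = n * Complex.normSq (w j - m) + V n m w := by
    intro j
    have hcross : ∑ k, ((w j - m) * (starRingEnd ℂ) (w k - m)).re = 0 := by
      rw [← Complex.re_sum, ← Finset.mul_sum, ← map_sum, hsum, map_zero, mul_zero,
        Complex.zero_re]
    have hre : ∀ k, w j - w k = (w j - m) - (w k - m) := fun k => by ring
    calc ∑ k, Complex.normSq (w j - w k)
        = ∑ k, (Complex.normSq (w j - m) + Complex.normSq (w k - m)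
            - 2 * ((w j - m) * (starRingEnd ℂ) (w k - m)).re) := by
          refine Finset.sum_congr rfl fun k _ => ?_
          rw [hre k, Complex.normSq_sub]
      _ = n * Complex.normSq (w j - m) + V n m w := by
          rw [Finset.sum_sub_distrib, Finset.sum_add_distrib, Finset.sum_const,
            Finset.card_univ, Fintype.card_fin, ← Finset.mul_sum, hcross, mul_zero, sub_zero,
            nsmul_eq_mul]
          rfl
  calc ∑ j, ∑ k, Complex.normSq (w j - w k)
      = ∑ j, ((n : ℝ) * Complex.normSq (w j - m) + V n m w) :=
        Finset.sum_congr rfl fun j _ => inner j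
    _ = 2 * n * V n m w := by
        rw [Finset.sum_add_distrib, ← Finset.mul_sum, Finset.sum_const, Finset.card_univ,
          Fintype.card_fin, nsmul_eq_mul]
        show (n : ℝ) * V n m w + n * V n m w = 2 * n * V n m w
        ring

lemma exists_pair (n : ℕ) (hn : 0 < n) (m : ℂ) (w : Fin n → ℂ)
    (hsum : ∑ i, (w i - m) = 0) (hV : 0 < V n m w) :
    ∃ j k, j ≠ k ∧ 2 * V n m w / n ≤ Complex.normSq (w j - w k) := by
  haveI : Nonempty (Fin n) := ⟨⟨0, hn⟩⟩
  by_contra h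
  push_neg at h
  have hnR : (0 : ℝ) < n := by exact_mod_cast hn
  have hpos : 0 < 2 * V n m w / n := by positivity
  have hall : ∀ j k : Fin n, Complex.normSq (w j - w k) < 2 * V n m w / n := by
    intro j k
    rcases eq_or_ne j k with rfl | hne
    · simpa using hpos
    · exact h j k hne
  have h1 : ∀ j : Fin n, ∑ k, Complex.normSq (w j - w k) < n * (2 * V n m w / n) := by
    intro j
    calc ∑ k, Complex.normSq (w j - w k)
        < ∑ _k : Fin n, (2 * V n m w / n) :=
          Finset.sum_lt_sum_of_nonempty Finset.univ_nonempty fun k _ => hall j k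
      _ = n * (2 * V n m w / n) := by
          rw [Finset.sum_const, Finset.card_univ, Fintype.card_fin, nsmul_eq_mul]
  have h2 : ∑ j, ∑ k, Complex.normSq (w j - w k) < n * (n * (2 * V n m w / n)) := by
    calc ∑ j, ∑ k, Complex.normSq (w j - w k)
        < ∑ _j : Fin n, (n * (2 * V n m w / n)) :=
          Finset.sum_lt_sum_of_nonempty Finset.univ_nonempty fun j _ => h1 j
      _ = n * (n * (2 * V n m w / n)) := by
          rw [Finset.sum_const, Finset.card_univ, Fintype.card_fin, nsmul_eq_mul]
  rw [sum_sq_pairs n m w hsum] at h2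
  have : (n : ℝ) * (n * (2 * V n m w / n)) = 2 * n * V n m w := by
    field_simp
  rw [this] at h2
  exact lt_irrefl _ h2

lemma one_step (n : ℕ) (hn : 0 < n) (m : ℂ) (w : Fin n → ℂ)
    (hw : ∀ i, ‖w i‖ ≤ 1) (hsum : ∑ i, (w i - m) = 0) :
    ∃ w' : Fin n → ℂ, (∀ i, ‖w' i‖ ≤ 1) ∧ (∑ i, (w' i - m) = 0) ∧
      V n m w' ≤ (1 - 1/n) * V n m w ∧
      ‖(∏ i, w i) - ∏ i, w' i‖ ≤ (V n m w - V n m w') / 2 := by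
  rcases (eq_or_lt_of_le (V_nonneg n m w)).imp Eq.symm id with hV0 | hVpos
  · refine ⟨w, hw, hsum, ?_, ?_⟩
    · simp [hV0]
    · simp
  · obtain ⟨j, k, hjk, hpair⟩ := exists_pair n hn m w hsum hVpos
    set μ : ℂ := (w j + w k) / 2 with hμdef
    set d : ℂ := (w j - w k) / 2 with hddef
    set w' : Fin n → ℂ := Function.update (Function.update w j μ) k μ with hw'def
    set s₀ : Finset (Fin n) := (Finset.univ.erase j).erase k with hs₀def
    have hw'j : w' j = μ := by
      rw [hw'def, Function.update_of_ne hjk, Function.update_self]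
    have hw'k : w' k = μ := by rw [hw'def, Function.update_self]
    have hw'other : ∀ i, i ≠ j → i ≠ k → w' i = w i := by
      intro i hij hik
      rw [hw'def, Function.update_of_ne hik, Function.update_of_ne hij]
    have hmem₀ : ∀ i ∈ s₀, i ≠ j ∧ i ≠ k := by
      intro i hi
      rw [hs₀def] at hi
      have h1 := Finset.mem_erase.mp hi
      have h2 := Finset.mem_erase.mp h1.2
      exact ⟨h2.1, h1.1⟩
    have hμ1 : ‖μ‖ ≤ 1 := by
      rw [hμdef, norm_div, Complex.norm_two]
      rw [div_le_one (by norm_num)]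
      calc ‖w j + w k‖ ≤ ‖w j‖ + ‖w k‖ :=
            norm_add_le _ _
        _ ≤ 2 := by linarith [hw j, hw k]
    have hdisc : ∀ i, ‖w' i‖ ≤ 1 := by
      intro i
      rcases eq_or_ne i k with rfl | hik
      · rw [hw'k]; exact hμ1
      rcases eq_or_ne i j with rfl | hij
      · rw [hw'j]; exact hμ1
      · rw [hw'other i hij hik]; exact hw i
    have hμμ : μ + μ = w j + w k := by rw [hμdef]; ring
    have hrest_sum : ∑ i ∈ s₀, (w' i - m) = ∑ i ∈ s₀, (w i - m) := by
      refine Finset.sum_congr rfl fun i hi => ?_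
      rw [hw'other i (hmem₀ i hi).1 (hmem₀ i hi).2]
    have hsum' : ∑ i, (w' i - m) = 0 := by
      rw [split3_add hjk (fun i => w' i - m), hrest_sum, hw'j, hw'k]
      rw [split3_add hjk (fun i => w i - m)] at hsum
      linear_combination hsum + hμμ
    -- V difference
    have haj : w j - m = (μ - m) + d := by rw [hμdef, hddef]; ring
    have hak : w k - m = (μ - m) - d := by rw [hμdef, hddef]; ring
    have hrest_V : ∑ i ∈ s₀, Complex.normSq (w' i - m) = ∑ i ∈ s₀, Complex.normSq (w i - m) := by
      refine Finset.sum_congr rfl fun i hi => ?_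
      rw [hw'other i (hmem₀ i hi).1 (hmem₀ i hi).2]
    have hkey : Complex.normSq (w j - m) + Complex.normSq (w k - m)
        = 2 * Complex.normSq (μ - m) + 2 * Complex.normSq d := by
      rw [haj, hak]
      exact para (μ - m) d
    have hVw : V n m w = Complex.normSq (w j - m) + Complex.normSq (w k - m)
        + ∑ i ∈ s₀, Complex.normSq (w i - m) :=
      split3_addR hjk (fun i => Complex.normSq (w i - m))
    have hVw' : V n m w' = Complex.normSq (μ - m) + Complex.normSq (μ - m)
        + ∑ i ∈ s₀, Complex.normSq (w i - m) := by
      rw [V, split3_addR hjk (fun i => Complex.normSq (w' i - m)), hrest_V, hw'j, hw'k]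
    have hVdiff : V n m w - V n m w' = 2 * Complex.normSq d := by
      rw [hVw, hVw']
      linarith [hkey]
    have hpair' : Complex.normSq (w j - w k) = 4 * Complex.normSq d := by
      have h2d : w j - w k = d + d := by rw [hddef]; ring
      rw [h2d, Complex.normSq_add, Complex.mul_conj, Complex.ofReal_re]
      ring
    have hVle : V n m w' ≤ (1 - 1/n) * V n m w := by
      have hnR : (0 : ℝ) < n := by exact_mod_cast hn
      have h1 : V n m w / n ≤ 2 * Complex.normSq d := by
        rw [hpair'] at hpair
        have e : 2 * V n m w / (n:ℝ) = 2 * (V n m w / n) := by ring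
        rw [e] at hpair
        linarith
      have hexp : (1 - 1/(n:ℝ)) * V n m w = V n m w - V n m w / n := by ring
      linarith [hVdiff]
    -- product difference
    have hrest_P : ∏ i ∈ s₀, w' i = ∏ i ∈ s₀, w i := by
      refine Finset.prod_congr rfl fun i hi => ?_
      rw [hw'other i (hmem₀ i hi).1 (hmem₀ i hi).2]
    have hprod : (∏ i, w i) - (∏ i, w' i) = -(d * d) * ∏ i ∈ s₀, w i := by
      rw [split3_mul hjk w, split3_mul hjk w', hrest_P, hw'j, hw'k]
      have hfac : w j * w k - μ * μ = -(d * d) := by rw [hμdef, hddef]; ring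
      linear_combination (∏ i ∈ s₀, w i) * hfac
    have habsP : ‖∏ i ∈ s₀, w i‖ ≤ 1 := by
      rw [norm_prod]
      exact Finset.prod_le_one (fun i _ => norm_nonneg _) (fun i _ => hw i)
    have habs : ‖(∏ i, w i) - ∏ i, w' i‖ ≤ (V n m w - V n m w') / 2 := by
      have hdd : ‖d‖ * ‖d‖ = Complex.normSq d := by
        rw [← Complex.sq_norm d]; ring
      rw [hprod, norm_mul, norm_neg, norm_mul, hdd, hVdiff]
      calc Complex.normSq d * ‖∏ i ∈ s₀, w i‖
          ≤ Complex.normSq d * 1 :=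
            mul_le_mul_of_nonneg_left habsP (Complex.normSq_nonneg _)
        _ = 2 * Complex.normSq d / 2 := by ring
    exact ⟨w', hdisc, hsum', hVle, habs⟩

lemma iterate (n : ℕ) (hn : 0 < n) (m : ℂ) :
    ∀ (K : ℕ) (w : Fin n → ℂ), (∀ i, ‖w i‖ ≤ 1) → (∑ i, (w i - m) = 0) →
      ∃ w' : Fin n → ℂ, (∀ i, ‖w' i‖ ≤ 1) ∧ (∑ i, (w' i - m) = 0) ∧
        V n m w' ≤ (1 - 1/n) ^ K * V n m w ∧
        ‖(∏ i, w i) - ∏ i, w' i‖ ≤ (V n m w - V n m w') / 2 := by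
  intro K
  induction K with
  | zero =>
    intro w hw hsum
    exact ⟨w, hw, hsum, by simp, by simp⟩
  | succ K ih =>
    intro w hw hsum
    obtain ⟨w₁, hw₁, hsum₁, hV₁, habs₁⟩ := one_step n hn m w hw hsum
    obtain ⟨w', hw', hsum', hV', habs'⟩ := ih w₁ hw₁ hsum₁
    have hc0 : (0 : ℝ) ≤ 1 - 1/n := by
      have : (1 : ℝ) ≤ n := by exact_mod_cast hn
      have h1 : 1/(n:ℝ) ≤ 1 := by
        rw [div_le_one (by linarith)]
        linarith
      linarith
    refine ⟨w', hw', hsum', ?_, ?_⟩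
    · calc V n m w' ≤ (1 - 1/n) ^ K * V n m w₁ := hV'
        _ ≤ (1 - 1/n) ^ K * ((1 - 1/n) * V n m w) :=
            mul_le_mul_of_nonneg_left hV₁ (pow_nonneg hc0 K)
        _ = (1 - 1/n) ^ (K + 1) * V n m w := by ring
    · calc ‖(∏ i, w i) - ∏ i, w' i‖
          ≤ ‖(∏ i, w i) - ∏ i, w₁ i‖
            + ‖(∏ i, w₁ i) - ∏ i, w' i‖ := norm_sub_le_norm_sub_add_norm_sub _ _ _
        _ ≤ (V n m w - V n m w₁) / 2 + (V n m w₁ - V n m w') / 2 := by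
            exact add_le_add habs₁ habs'
        _ = (V n m w - V n m w') / 2 := by ring

end Stmt15Aux

open Stmt15Aux Filter

/-- Bound on the distance between a product and the `n`-th power of the
arithmetic mean. -/
theorem stmt_15 (n : ℕ) (hn : 2 ≤ n) (z : Fin n → ℂ)
    (hz : ∀ j, ‖z j‖ ≤ 1)
    (zt : ℂ) (hzt : zt = (1 / (n : ℂ)) * ∑ j : Fin n, z j) :
    ‖(∏ j : Fin n, z j) - zt ^ n‖
      ≤ (1 / 2) * ∑ j : Fin n, ‖z j - zt‖ ^ 2 := by
  have hn0 : 0 < n := by omega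
  have hnC : (n : ℂ) ≠ 0 := by
    simpa using Nat.pos_iff_ne_zero.mp hn0
  have hnR : (0 : ℝ) < n := by exact_mod_cast hn0
  -- mean property
  have hsum0 : ∑ i, (z i - zt) = 0 := by
    rw [Finset.sum_sub_distrib, Finset.sum_const, Finset.card_univ, Fintype.card_fin,
      nsmul_eq_mul, hzt]
    field_simp
    ring
  have hzt1 : ‖zt‖ ≤ 1 := by
    rw [hzt, norm_mul, norm_div, norm_one, Complex.norm_natCast]
    have h1 : ‖∑ j, z j‖ ≤ n := by
      calc ‖∑ j, z j‖ ≤ ∑ j, ‖z j‖ := norm_sum_le _ _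
        _ ≤ ∑ _j : Fin n, (1:ℝ) := Finset.sum_le_sum fun j _ => hz j
        _ = n := by simp
    rw [div_mul_eq_mul_div, one_mul, div_le_one hnR]
    exact h1
  set V₀ : ℝ := V n zt z with hV₀
  have key : ∀ K : ℕ, ‖(∏ j, z j) - zt ^ n‖
      ≤ V₀ / 2 + n * Real.sqrt ((1 - 1/n) ^ K * V₀) := by
    intro K
    obtain ⟨w', hw', hsum', hV', habs'⟩ := iterate n hn0 zt K z hz hsum0
    have hpow : zt ^ n = ∏ _i : Fin n, zt := by
      rw [Finset.prod_const, Finset.card_univ, Fintype.card_fin]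
    have h2 : ‖(∏ i, w' i) - zt ^ n‖ ≤ n * Real.sqrt ((1 - 1/n) ^ K * V₀) := by
      rw [hpow]
      calc ‖(∏ i, w' i) - ∏ _i : Fin n, zt‖
          ≤ ∑ i, ‖w' i - zt‖ :=
            abs_prod_sub_prod_le Finset.univ w' (fun _ => zt) hw' (fun _ => hzt1)
        _ ≤ ∑ _i : Fin n, Real.sqrt ((1 - 1/n) ^ K * V₀) := by
            refine Finset.sum_le_sum fun i _ => ?_
            rw [Complex.norm_def]
            refine Real.sqrt_le_sqrt ?_
            calc Complex.normSq (w' i - zt)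
                ≤ V n zt w' := Finset.single_le_sum
                  (f := fun i => Complex.normSq (w' i - zt))
                  (fun i _ => Complex.normSq_nonneg _) (Finset.mem_univ i)
              _ ≤ (1 - 1/n) ^ K * V₀ := hV'
        _ = n * Real.sqrt ((1 - 1/n) ^ K * V₀) := by
            rw [Finset.sum_const, Finset.card_univ, Fintype.card_fin, nsmul_eq_mul]
    have h1 : ‖(∏ j, z j) - ∏ i, w' i‖ ≤ V₀ / 2 := by
      refine habs'.trans ?_
      have := V_nonneg n zt w'
      rw [← hV₀] at *
      linarith [V_nonneg n zt w']
    calc ‖(∏ j, z j) - zt ^ n‖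
        ≤ ‖(∏ j, z j) - ∏ i, w' i‖
          + ‖(∏ i, w' i) - zt ^ n‖ := norm_sub_le_norm_sub_add_norm_sub _ _ _
      _ ≤ V₀ / 2 + n * Real.sqrt ((1 - 1/n) ^ K * V₀) := add_le_add h1 h2
  -- take the limit K → ∞
  have hc0 : (0 : ℝ) ≤ 1 - 1/n := by
    have h1 : 1/(n:ℝ) ≤ 1 := by
      rw [div_le_one hnR]
      exact_mod_cast hn0
    linarith
  have hc1 : (1 - 1/(n:ℝ)) < 1 := by
    have : 0 < 1/(n:ℝ) := by positivity
    linarith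
  have hT0 : Tendsto (fun K : ℕ => (1 - 1/(n:ℝ)) ^ K) atTop (nhds 0) :=
    tendsto_pow_atTop_nhds_zero_of_lt_one hc0 hc1
  have hT1 : Tendsto (fun K : ℕ => (1 - 1/(n:ℝ)) ^ K * V₀) atTop (nhds 0) := by
    have := hT0.mul_const V₀
    simpa using this
  have hT2 : Tendsto (fun K : ℕ => Real.sqrt ((1 - 1/(n:ℝ)) ^ K * V₀)) atTop (nhds 0) := by
    have := (Real.continuous_sqrt.tendsto 0).comp hT1
    simpa [Function.comp_def] using this
  have hT3 : Tendsto (fun K : ℕ => V₀ / 2 + n * Real.sqrt ((1 - 1/(n:ℝ)) ^ K * V₀))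
      atTop (nhds (V₀ / 2)) := by
    have h4 : Tendsto (fun K : ℕ => (n:ℝ) * Real.sqrt ((1 - 1/(n:ℝ)) ^ K * V₀))
        atTop (nhds 0) := by
      have := hT2.const_mul (n:ℝ)
      simpa using this
    have hconst : Tendsto (fun _ : ℕ => V₀ / 2) atTop (nhds (V₀ / 2)) := tendsto_const_nhds
    have := hconst.add h4
    simpa using this
  have hfinal : ‖(∏ j, z j) - zt ^ n‖ ≤ V₀ / 2 := ge_of_tendsto' hT3 key
  refine hfinal.trans (le_of_eq ?_)
  rw [hV₀, V]
  simp_rw [Complex.sq_norm]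
  ring
end

section
/- Let 2 ≤ n ≤ N and Z = (z_{j,r}) an N×n complex matrix with column means z̃_r = (1/N)∑_j z_{j,r} and differences y_{u,v,r} = z_{u,r}−z_{v,r}. Define ϑ₄ = ((N−4)!/N!)·√((n−4)!/n!)·(∑_{(q,r,s,t) distinct in [n]} (∑_{(u,v,w,x) distinct in [N]} |y_{u,v,q}·y_{u,v,r}·y_{w,x,s}·y_{w,x,t}|)²)^{1/2} for n ≥ 4 (ϑ₄ = 0 for n ∈ {2,3}), and ϑ = (1/(N(N−1)√(n(n−1))))·(∑_{(r,s) distinct in [n]} (∑_{(u,v) distinct in [N]} |y_{u,v,r}·y_{u,v,s}|)²)^{1/2}. Then for n ≥ 4 and N ≥ 4: ϑ₄ ≤ √(n(n−1)/((n−2)(n−3))) · (N(N−1)/((N−2)(N−3))) · ϑ². -/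
noncomputable def Aq (N n : ℕ) (z : Fin N → Fin n → ℂ) (r s : Fin n) : ℝ :=
  ∑ u : Fin N, ∑ v : Fin N,
    if u ≠ v then ‖(z u r - z v r) * (z u s - z v s)‖ else 0

noncomputable def S2v (N n : ℕ) (z : Fin N → Fin n → ℂ) : ℝ :=
  ∑ r : Fin n, ∑ s : Fin n, if r ≠ s then (Aq N n z r s) ^ 2 else 0

noncomputable def Bq (N n : ℕ) (z : Fin N → Fin n → ℂ) (q r s t : Fin n) : ℝ :=
  ∑ u : Fin N, ∑ v : Fin N, ∑ w : Fin N, ∑ x : Fin N,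
    if u ≠ v ∧ u ≠ w ∧ u ≠ x ∧ v ≠ w ∧ v ≠ x ∧ w ≠ x then
      ‖(z u q - z v q) * (z u r - z v r) * (z w s - z x s) * (z w t - z x t)‖
    else 0

noncomputable def S4v (N n : ℕ) (z : Fin N → Fin n → ℂ) : ℝ :=
  ∑ q : Fin n, ∑ r : Fin n, ∑ s : Fin n, ∑ t : Fin n,
    if q ≠ r ∧ q ≠ s ∧ q ≠ t ∧ r ≠ s ∧ r ≠ t ∧ s ≠ t then (Bq N n z q r s t) ^ 2 else 0

lemma Aq_nonneg (N n : ℕ) (z : Fin N → Fin n → ℂ) (r s : Fin n) : 0 ≤ Aq N n z r s :=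
  Finset.sum_nonneg fun u _ => Finset.sum_nonneg fun v _ => by positivity

lemma Bq_nonneg (N n : ℕ) (z : Fin N → Fin n → ℂ) (q r s t : Fin n) : 0 ≤ Bq N n z q r s t :=
  Finset.sum_nonneg fun u _ => Finset.sum_nonneg fun v _ =>
    Finset.sum_nonneg fun w _ => Finset.sum_nonneg fun x _ => by positivity

lemma S2v_nonneg (N n : ℕ) (z : Fin N → Fin n → ℂ) : 0 ≤ S2v N n z :=
  Finset.sum_nonneg fun r _ => Finset.sum_nonneg fun s _ => by positivity

lemma Bq_le (N n : ℕ) (z : Fin N → Fin n → ℂ) (q r s t : Fin n) :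
    Bq N n z q r s t ≤ Aq N n z q r * Aq N n z s t := by
  have expand : Aq N n z q r * Aq N n z s t =
      ∑ u : Fin N, ∑ v : Fin N, ∑ w : Fin N, ∑ x : Fin N,
        (if u ≠ v then ‖(z u q - z v q) * (z u r - z v r)‖ else 0) *
        (if w ≠ x then ‖(z w s - z x s) * (z w t - z x t)‖ else 0) := by
    unfold Aq
    rw [Finset.sum_mul]
    refine Finset.sum_congr rfl fun u _ => ?_
    rw [Finset.sum_mul]
    refine Finset.sum_congr rfl fun v _ => ?_
    rw [Finset.mul_sum]
    refine Finset.sum_congr rfl fun w _ => ?_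
    rw [Finset.mul_sum]
  rw [expand]
  unfold Bq
  refine Finset.sum_le_sum fun u _ => Finset.sum_le_sum fun v _ =>
    Finset.sum_le_sum fun w _ => Finset.sum_le_sum fun x _ => ?_
  by_cases h : u ≠ v ∧ u ≠ w ∧ u ≠ x ∧ v ≠ w ∧ v ≠ x ∧ w ≠ x
  · rw [if_pos h, if_pos h.1, if_pos h.2.2.2.2.2, ← norm_mul]
    apply le_of_eq
    congr 1
    ring
  · rw [if_neg h]
    apply mul_nonneg <;> (split_ifs <;> positivity)

lemma S4v_le (N n : ℕ) (z : Fin N → Fin n → ℂ) : S4v N n z ≤ (S2v N n z) ^ 2 := by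
  have expand : (S2v N n z) ^ 2 =
      ∑ q : Fin n, ∑ r : Fin n, ∑ s : Fin n, ∑ t : Fin n,
        (if q ≠ r then (Aq N n z q r) ^ 2 else 0) *
        (if s ≠ t then (Aq N n z s t) ^ 2 else 0) := by
    rw [sq]
    unfold S2v
    rw [Finset.sum_mul]
    refine Finset.sum_congr rfl fun q _ => ?_
    rw [Finset.sum_mul]
    refine Finset.sum_congr rfl fun r _ => ?_
    rw [Finset.mul_sum]
    refine Finset.sum_congr rfl fun s _ => ?_
    rw [Finset.mul_sum]
  rw [expand]
  unfold S4v
  refine Finset.sum_le_sum fun q _ => Finset.sum_le_sum fun r _ =>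
    Finset.sum_le_sum fun s _ => Finset.sum_le_sum fun t _ => ?_
  by_cases h : q ≠ r ∧ q ≠ s ∧ q ≠ t ∧ r ≠ s ∧ r ≠ t ∧ s ≠ t
  · rw [if_pos h, if_pos h.1, if_pos h.2.2.2.2.2, ← mul_pow]
    exact pow_le_pow_left₀ (Bq_nonneg N n z q r s t) (Bq_le N n z q r s t) 2
  · rw [if_neg h]
    apply mul_nonneg <;> (split_ifs <;> positivity)

lemma fac_div (m : ℕ) (hm : 4 ≤ m) :
    ((m - 4).factorial : ℝ) / (m.factorial : ℝ)
      = 1 / ((m : ℝ) * ((m : ℝ) - 1) * (((m : ℝ) - 2) * ((m : ℝ) - 3))) := by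
  obtain ⟨k, rfl⟩ := Nat.exists_eq_add_of_le hm
  have h1 : 4 + k - 4 = k := by omega
  have h2 : 4 + k = k + 4 := by omega
  rw [h1, h2]
  have hfac : ((k + 4).factorial : ℝ)
      = ((k : ℝ) + 4) * ((k : ℝ) + 3) * ((k : ℝ) + 2) * ((k : ℝ) + 1) * (k.factorial : ℝ) := by
    simp [Nat.factorial]
    ring
  rw [hfac]
  have hk : (0 : ℝ) < (k.factorial : ℝ) := by exact_mod_cast k.factorial_pos
  have hk0 : (0 : ℝ) ≤ (k : ℝ) := k.cast_nonneg
  push_cast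
  rw [show ((k:ℝ) + 4) - 1 = (k:ℝ) + 3 by ring, show ((k:ℝ) + 4) - 2 = (k:ℝ) + 2 by ring,
    show ((k:ℝ) + 4) - 3 = (k:ℝ) + 1 by ring]
  rw [div_eq_div_iff (by positivity) (by positivity)]
  ring

set_option maxHeartbeats 1000000 in
/-- Inequality (33): `ϑ₄ ≤ √(n(n−1)/((n−2)(n−3))) · (N(N−1)/((N−2)(N−3))) · ϑ²`. -/
theorem stmt_18 (N n : ℕ) (hn : 4 ≤ n) (hnN : n ≤ N) (z : Fin N → Fin n → ℂ)
    (θ θ4 : ℝ)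
    (hθ : θ = (1 / ((N : ℝ) * ((N : ℝ) - 1) * Real.sqrt ((n : ℝ) * ((n : ℝ) - 1)))) *
      Real.sqrt (∑ r : Fin n, ∑ s : Fin n,
        if r ≠ s then
          (∑ u : Fin N, ∑ v : Fin N,
            if u ≠ v then
              ‖(z u r - z v r) * (z u s - z v s)‖
            else 0) ^ 2
        else 0))
    (hθ4 : θ4 = (((N - 4).factorial : ℝ) / (N.factorial : ℝ)) *
      Real.sqrt (((n - 4).factorial : ℝ) / (n.factorial : ℝ)) *
      Real.sqrt (∑ q : Fin n, ∑ r : Fin n, ∑ s : Fin n, ∑ t : Fin n,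
        if q ≠ r ∧ q ≠ s ∧ q ≠ t ∧ r ≠ s ∧ r ≠ t ∧ s ≠ t then
          (∑ u : Fin N, ∑ v : Fin N, ∑ w : Fin N, ∑ x : Fin N,
            if u ≠ v ∧ u ≠ w ∧ u ≠ x ∧ v ≠ w ∧ v ≠ x ∧ w ≠ x then
              ‖(z u q - z v q) * (z u r - z v r) *
                (z w s - z x s) * (z w t - z x t)‖
            else 0) ^ 2
        else 0)) :
    θ4 ≤ Real.sqrt ((n : ℝ) * ((n : ℝ) - 1) / (((n : ℝ) - 2) * ((n : ℝ) - 3))) *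
        ((N : ℝ) * ((N : ℝ) - 1) / (((N : ℝ) - 2) * ((N : ℝ) - 3))) * θ ^ 2 := by
  have hN : 4 ≤ N := hn.trans hnN
  have hn4 : (4 : ℝ) ≤ (n : ℝ) := by exact_mod_cast hn
  have hN4 : (4 : ℝ) ≤ (N : ℝ) := by exact_mod_cast hN
  have hθ' : θ = (1 / ((N : ℝ) * ((N : ℝ) - 1) * Real.sqrt ((n : ℝ) * ((n : ℝ) - 1)))) *
      Real.sqrt (S2v N n z) := hθ
  have hθ4' : θ4 = (((N - 4).factorial : ℝ) / (N.factorial : ℝ)) *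
      Real.sqrt (((n - 4).factorial : ℝ) / (n.factorial : ℝ)) *
      Real.sqrt (S4v N n z) := hθ4
  have hS2nn := S2v_nonneg N n z
  have key : Real.sqrt (S4v N n z) ≤ S2v N n z := by
    calc Real.sqrt (S4v N n z) ≤ Real.sqrt ((S2v N n z) ^ 2) :=
        Real.sqrt_le_sqrt (S4v_le N n z)
      _ = S2v N n z := Real.sqrt_sq hS2nn
  set a : ℝ := (n : ℝ) * ((n : ℝ) - 1) with ha
  set b : ℝ := ((n : ℝ) - 2) * ((n : ℝ) - 3) with hb
  have hapos : 0 < a := by rw [ha]; nlinarith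
  have hbpos : 0 < b := by rw [hb]; nlinarith
  have hsa : (0 : ℝ) < Real.sqrt a := Real.sqrt_pos.mpr hapos
  have hsb : (0 : ℝ) < Real.sqrt b := Real.sqrt_pos.mpr hbpos
  rw [hθ', hθ4', fac_div N hN, fac_div n hn]
  rw [show (1 : ℝ) / (a * b) = 1 / (a * b) from rfl]
  have h1 : Real.sqrt (1 / (a * b)) = 1 / (Real.sqrt a * Real.sqrt b) := by
    rw [one_div, Real.sqrt_inv, Real.sqrt_mul hapos.le, one_div]
  have h2 : Real.sqrt (a / b) = Real.sqrt a / Real.sqrt b := Real.sqrt_div hapos.le b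
  rw [h1, h2]
  have hsq : (1 / ((N : ℝ) * ((N : ℝ) - 1) * Real.sqrt a) * Real.sqrt (S2v N n z)) ^ 2
      = (1 / ((N : ℝ) * ((N : ℝ) - 1) * Real.sqrt a)) ^ 2 * S2v N n z := by
    rw [mul_pow, Real.sq_sqrt hS2nn]
  rw [hsq]
  have hNe : (N : ℝ) ≠ 0 := ne_of_gt (by linarith)
  have hN1 : (N : ℝ) - 1 ≠ 0 := ne_of_gt (by linarith)
  have hN2 : (N : ℝ) - 2 ≠ 0 := ne_of_gt (by linarith)
  have hN3 : (N : ℝ) - 3 ≠ 0 := ne_of_gt (by linarith)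
  have hconst : Real.sqrt a / Real.sqrt b *
      ((N : ℝ) * ((N : ℝ) - 1) / (((N : ℝ) - 2) * ((N : ℝ) - 3))) *
      ((1 / ((N : ℝ) * ((N : ℝ) - 1) * Real.sqrt a)) ^ 2 * S2v N n z)
      = 1 / ((N : ℝ) * ((N : ℝ) - 1) * (((N : ℝ) - 2) * ((N : ℝ) - 3))) *
        (1 / (Real.sqrt a * Real.sqrt b)) * S2v N n z := by
    have hsa' : Real.sqrt a ≠ 0 := ne_of_gt hsa
    have hsb' : Real.sqrt b ≠ 0 := ne_of_gt hsb
    field_simp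
  rw [hconst]
  have hP : (0 : ℝ) < (N : ℝ) * ((N : ℝ) - 1) * (((N : ℝ) - 2) * ((N : ℝ) - 3)) :=
    mul_pos (mul_pos (by linarith) (by linarith)) (mul_pos (by linarith) (by linarith))
  have hcnn : 0 ≤ 1 / ((N : ℝ) * ((N : ℝ) - 1) * (((N : ℝ) - 2) * ((N : ℝ) - 3))) *
      (1 / (Real.sqrt a * Real.sqrt b)) :=
    mul_nonneg (one_div_nonneg.mpr hP.le)
      (one_div_nonneg.mpr (mul_nonneg hsa.le hsb.le))
  exact mul_le_mul_of_nonneg_left key hcnn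
end
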